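/- arXiv:2302.06125 — 8 statements merged into one kernel-verified Lean document; each statement's English description precedes it below -/
import Mathlib

section
/- The odd chromatic number of the 5-cycle C₅ equals 5. -/
open SimpleGraph

variable {V : Type*}

/-- Number of times color `a` appears on the neighborhood of `v`. -/
noncomputable def colMult (G : SimpleGraph V) (c : V → ℕ) (v : V) (a : ℕ) : ℕ :=
  {u | G.Adj v u ∧ c u = a}.ncard

/-- A proper `k`-coloring, with colors `0, …, k-1`. -/
def IsProperCol (G : SimpleGraph V) (k : ℕ) (c : V → ℕ) : Prop :=
  (∀ v, c v < k) ∧ ∀ u v, G.Adj u v → c u ≠ c v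

/-- An odd `k`-coloring. -/
def IsOddCol (G : SimpleGraph V) (k : ℕ) (c : V → ℕ) : Prop :=
  IsProperCol G k c ∧ ∀ v, (∃ u, G.Adj v u) → ∃ a, Odd (colMult G c v a)

/-- A proper conflict-free `k`-coloring. -/
def IsPCFCol (G : SimpleGraph V) (k : ℕ) (c : V → ℕ) : Prop :=
  IsProperCol G k c ∧ ∀ v, (∃ u, G.Adj v u) → ∃ a, colMult G c v a = 1

/-- Degree as the size of the neighborhood. -/
noncomputable def deg (G : SimpleGraph V) (v : V) : ℕ := (G.neighborSet v).ncard

/-- Maximum degree. -/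
noncomputable def maxDeg (G : SimpleGraph V) : ℕ := sSup (Set.range fun v => deg G v)

/-- A proper `h`-conflict-free `k`-coloring: every vertex `v` has at least
`min (deg v) h` colors appearing exactly once on its neighborhood. -/
def IsHCFCol (G : SimpleGraph V) (h k : ℕ) (c : V → ℕ) : Prop :=
  IsProperCol G k c ∧ ∀ v, min (deg G v) h ≤ {a | colMult G c v a = 1}.ncard

/-- An `h`-dynamic `k`-coloring: every vertex sees at least `min (deg v) h` colors. -/
def IsDynCol (G : SimpleGraph V) (h k : ℕ) (c : V → ℕ) : Prop :=
  IsProperCol G k c ∧ ∀ v, min (deg G v) h ≤ (c '' G.neighborSet v).ncard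

noncomputable def chi (G : SimpleGraph V) : ℕ := sInf {k | ∃ c, IsProperCol G k c}
noncomputable def chiOdd (G : SimpleGraph V) : ℕ := sInf {k | ∃ c, IsOddCol G k c}
noncomputable def chiPCF (G : SimpleGraph V) : ℕ := sInf {k | ∃ c, IsPCFCol G k c}
noncomputable def chiHPCF (G : SimpleGraph V) (h : ℕ) : ℕ := sInf {k | ∃ c, IsHCFCol G h k c}

/-- The square of a graph. -/
def graphSq (G : SimpleGraph V) : SimpleGraph V where
  Adj u v := u ≠ v ∧ (G.Adj u v ∨ ∃ w, G.Adj u w ∧ G.Adj w v)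
  symm := by
    constructor
    rintro u v ⟨h1, h2 | ⟨w, hw1, hw2⟩⟩
    · exact ⟨h1.symm, Or.inl h2.symm⟩
    · exact ⟨h1.symm, Or.inr ⟨w, hw2.symm, hw1.symm⟩⟩
  loopless := ⟨fun v h => h.1 rfl⟩

/-- The 5-cycle on `ZMod 5`. -/
def C5 : SimpleGraph (ZMod 5) := SimpleGraph.fromRel (fun u v => v = u + 1)

lemma C5_adj (u v : ZMod 5) : C5.Adj u v ↔ u ≠ v ∧ (v = u + 1 ∨ u = v + 1) := by
  simp [C5, SimpleGraph.fromRel_adj]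

lemma C5_adj' (v u : ZMod 5) : C5.Adj v u ↔ (u = v - 1 ∨ u = v + 1) := by
  rw [C5_adj]; revert v u; decide

lemma sub_ne_add (v : ZMod 5) : v - 1 ≠ v + 1 := by revert v; decide

lemma odd_forces (c : ZMod 5 → ℕ) (v : ZMod 5)
    (h : ∃ a, Odd (colMult C5 c v a)) : c (v - 1) ≠ c (v + 1) := by
  intro heq
  obtain ⟨a, ha⟩ := h
  have hset : {u | C5.Adj v u ∧ c u = a}
      = if c (v - 1) = a then {v - 1, v + 1} else (∅ : Set (ZMod 5)) := by
    ext u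
    split_ifs with h' <;>
      simp only [Set.mem_setOf_eq, C5_adj', Set.mem_insert_iff, Set.mem_singleton_iff,
        Set.mem_empty_iff_false, iff_false, not_and]
    · constructor
      · rintro ⟨h1, _⟩; exact h1
      · rintro (rfl | rfl)
        · exact ⟨Or.inl rfl, h'⟩
        · exact ⟨Or.inr rfl, heq ▸ h'⟩
    · rintro (rfl | rfl)
      · exact fun hc => h' hc
      · exact fun hc => h' (heq.trans hc)
  rw [colMult, hset] at ha
  split_ifs at ha
  · rw [Set.ncard_pair (sub_ne_add v)] at ha
    exact absurd (Nat.odd_iff.mp ha) (by decide)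
  · rw [Set.ncard_empty] at ha
    exact absurd (Nat.odd_iff.mp ha) (by decide)

lemma case5 : ∀ u v : ZMod 5, u = v ∨ (u ≠ v ∧ (v = u + 1 ∨ u = v + 1)) ∨ v = u + 2 ∨ u = v + 2 := by
  decide

/-- χ_o(C₅) = 5. -/
theorem stmt_1 : chiOdd C5 = 5 := by
  have hmem : 5 ∈ {k | ∃ c, IsOddCol C5 k c} := by
    refine ⟨fun v => v.val, ⟨⟨fun v => v.val_lt, ?_⟩, ?_⟩⟩
    · intro u v huv
      rw [C5_adj] at huv
      exact fun h => huv.1 (ZMod.val_injective 5 h)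
    · intro v _
      refine ⟨(v - 1).val, ?_⟩
      have hset : {u | C5.Adj v u ∧ (fun v => v.val) u = (v - 1).val} = {v - 1} := by
        ext u
        simp only [Set.mem_setOf_eq, C5_adj', Set.mem_singleton_iff]
        constructor
        · rintro ⟨rfl | rfl, h2⟩
          · rfl
          · exact absurd (ZMod.val_injective 5 h2) (sub_ne_add v).symm
        · rintro rfl; exact ⟨Or.inl rfl, rfl⟩
      rw [colMult, hset, Set.ncard_singleton]
      exact odd_one
  refine le_antisymm (Nat.sInf_le hmem) (le_csInf ⟨5, hmem⟩ ?_)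
  rintro k ⟨c, ⟨⟨hlt, hprop⟩, hodd⟩⟩
  have hne : ∀ v : ZMod 5, ∃ u, C5.Adj v u := by
    intro v; exact ⟨v + 1, by rw [C5_adj']; exact Or.inr rfl⟩
  have hd : ∀ v : ZMod 5, c (v - 1) ≠ c (v + 1) := fun v => odd_forces c v (hodd v (hne v))
  have hinj : Function.Injective c := by
    intro u v h
    by_contra huv
    have hcase := case5 u v
    rw [← C5_adj] at hcase
    rcases hcase with rfl | hadj | rfl | rfl
    · exact huv rfl
    · exact hprop u v hadj h
    · have := hd (u + 1)
      rw [add_sub_cancel_right] at this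
      exact this (by rw [show u + 1 + 1 = u + 2 from by ring]; exact h)
    · have := hd (v + 1)
      rw [add_sub_cancel_right] at this
      exact this (by rw [show v + 1 + 1 = v + 2 from by ring]; exact h.symm)
  have h5 : (Finset.univ.image c).card = 5 := by
    rw [Finset.card_image_of_injective _ hinj]; simp
  have hsub : Finset.univ.image c ⊆ Finset.range k := by
    intro a ha
    obtain ⟨v, _, rfl⟩ := Finset.mem_image.mp ha
    exact Finset.mem_range.mpr (hlt v)
  calc 5 = (Finset.univ.image c).card := h5.symm
    _ ≤ (Finset.range k).card := Finset.card_le_card hsub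
    _ = k := Finset.card_range k
end

section
/- If G is a 2-edge-connected graph, then G has an ear decomposition whose initial cycle is any prescribed cycle of G. -/
open SimpleGraph

variable {V : Type*}

/-- An ear decomposition of `G`: a sequence `E 0, …, E m` of subgraphs whose edge sets
partition the edges of `G`, where `E 0` is a cycle, and each later ear is either a path
meeting the previous part exactly in its two endpoints, or a cycle meeting it in a
single vertex. -/
structure EarDecomp {V : Type*} (G : SimpleGraph V) where
  m : ℕ
  E : ℕ → G.Subgraph
  cover : ∀ s, s ∈ G.edgeSet ↔ ∃ i ≤ m, s ∈ (E i).edgeSet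
  disj : ∀ i j, i ≤ m → j ≤ m → i ≠ j → Disjoint (E i).edgeSet (E j).edgeSet
  init : ∃ (v : V) (w : G.Walk v v), w.IsCycle ∧ E 0 = w.toSubgraph
  ear : ∀ i, 1 ≤ i → i ≤ m →
    (∃ (u v : V) (w : G.Walk u v), w.IsPath ∧ u ≠ v ∧ E i = w.toSubgraph ∧
      (⋃ j ∈ Set.Iio i, (E j).verts) ∩ (E i).verts = {u, v}) ∨
    (∃ (v : V) (w : G.Walk v v), w.IsCycle ∧ E i = w.toSubgraph ∧
      ∃ x, (⋃ j ∈ Set.Iio i, (E j).verts) ∩ (E i).verts = {x})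

section EarAux

variable {G : SimpleGraph V}

lemma aux_dart_fst_mem_dropLast {a b : V} (p : G.Walk a b) {d : G.Dart} (hd : d ∈ p.darts) :
    d.toProd.1 ∈ p.support.dropLast := by
  rw [← p.map_fst_darts]
  exact List.mem_map_of_mem hd

lemma aux_exists_boundary {U : Set V} : ∀ {a b : V} (_ : G.Walk a b), a ∈ U → b ∉ U →
    ∃ x y, x ∈ U ∧ y ∉ U ∧ G.Adj x y := by
  intro a b p
  induction p with
  | nil => exact fun ha hb => absurd ha hb
  | @cons a c b h q ih =>
    intro ha hb
    by_cases hc : c ∈ U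
    · exact ih hc hb
    · exact ⟨a, c, ha, hc, h⟩

lemma aux_exists_prefix_until {U : Set V} : ∀ {a b : V} (p : G.Walk a b), a ∉ U → b ∈ U →
    ∃ (y : V) (q : G.Walk a y), y ∈ U ∧ q.support <+: p.support ∧ q.edges <+: p.edges ∧
      ∀ z ∈ q.support.dropLast, z ∉ U := by
  intro a b p
  induction p with
  | nil => exact fun ha hb => absurd hb ha
  | @cons a c b h q ih =>
    intro ha _hb
    by_cases hc : c ∈ U
    · refine ⟨c, Walk.cons h Walk.nil, hc, ⟨q.support.tail, ?_⟩, ⟨q.edges, ?_⟩, ?_⟩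
      · simp only [Walk.support_cons, Walk.support_nil, List.cons_append, List.singleton_append,
          List.nil_append]
        rw [← q.support_eq_cons]
      · simp
      · intro z hz
        have hz' : z ∈ ([a] : List V) := hz
        rw [List.mem_singleton] at hz'
        subst hz'
        exact ha
    · obtain ⟨y, q', h1, ⟨t1, ht1⟩, ⟨t2, ht2⟩, h4⟩ := ih hc _hb
      refine ⟨y, Walk.cons h q', h1, ⟨t1, ?_⟩, ⟨t2, ?_⟩, ?_⟩
      · simp only [Walk.support_cons, List.cons_append, ht1]
      · simp only [Walk.edges_cons, List.cons_append, ht2]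
      · intro z hz
        rw [Walk.support_cons, List.dropLast_cons_of_ne_nil q'.support_ne_nil] at hz
        rcases List.mem_cons.mp hz with rfl | hz
        · exact ha
        · exact h4 z hz

lemma aux_edge_endpoint {U : Set V} {a b : V} {p : G.Walk a b}
    (hp : ∀ z ∈ p.support.dropLast, z ∉ U) {e : Sym2 V} (he : e ∈ p.edges) :
    ∃ z, z ∈ e ∧ z ∉ U := by
  have he' : e ∈ p.darts.map SimpleGraph.Dart.edge := he
  obtain ⟨d, hd, rfl⟩ := List.mem_map.mp he'
  refine ⟨d.toProd.1, ?_, hp _ (aux_dart_fst_mem_dropLast p hd)⟩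
  obtain ⟨⟨x, y⟩, hxy⟩ := d
  simp [SimpleGraph.Dart.edge]

lemma aux_cycle_dart_fst {u z : V} {c : G.Walk u u} (hc : c.IsCycle) {d : G.Dart}
    (hd : d ∈ c.darts) (hfst : d.toProd.1 = u) (hsnd : d.toProd.2 = z) :
    ∃ (h : G.Adj u z) (q : G.Walk z u), (Walk.cons h q).IsCycle := by
  cases c with
  | nil => exact absurd rfl hc.ne_nil
  | @cons _ x _ h q =>
    rw [Walk.darts_cons] at hd
    rcases List.mem_cons.mp hd with rfl | hd'
    · obtain rfl : x = z := hsnd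
      exact ⟨h, q, hc⟩
    · exfalso
      have h1 : d.toProd.1 ∈ q.support.dropLast := aux_dart_fst_mem_dropLast q hd'
      rw [hfst] at h1
      have h2 : q.support.Nodup := by
        have := hc.support_nodup
        rwa [Walk.support_cons, List.tail_cons] at this
      have h3 := List.dropLast_append_getLast (l := q.support) (by simp)
      rw [q.getLast_support] at h3
      rw [← h3, List.nodup_append] at h2
      exact h2.2.2 _ h1 _ (by simp) rfl

lemma aux_cycle_dropLast_nodup {u : V} {c : G.Walk u u} (hc : c.IsCycle) :
    c.support.dropLast.Nodup := by
  cases c with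
  | nil => simp
  | @cons _ x _ h q =>
    rw [Walk.support_cons, List.dropLast_cons_of_ne_nil q.support_ne_nil, List.nodup_cons]
    have h2 : q.support.Nodup := by
      have := hc.support_nodup
      rwa [Walk.support_cons, List.tail_cons] at this
    have h3 := List.dropLast_append_getLast (l := q.support) (by simp)
    rw [q.getLast_support] at h3
    have h2' := h2
    rw [← h3, List.nodup_append] at h2'
    exact ⟨fun hm => h2'.2.2 _ hm _ (by simp) rfl, h2'.1⟩

lemma aux_isCycle_reverse {u : V} {c : G.Walk u u} (hc : c.IsCycle) : c.reverse.IsCycle := by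
  refine ⟨⟨Walk.IsTrail.reverse _ hc.isCircuit.isTrail, ?_⟩, ?_⟩
  · intro h
    apply hc.ne_nil
    have h2 := congrArg Walk.reverse h
    rwa [Walk.reverse_reverse, Walk.reverse_nil] at h2
  · rw [Walk.support_reverse, List.tail_reverse]
    exact List.nodup_reverse.mpr (aux_cycle_dropLast_nodup hc)

lemma aux_exists_cycle_cons {u z v0 : V} {c : G.Walk v0 v0} (hc : c.IsCycle)
    (he : s(u, z) ∈ c.edges) :
    ∃ (h : G.Adj u z) (q : G.Walk z u), (Walk.cons h q).IsCycle := by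
  classical
  have hu : u ∈ c.support := c.fst_mem_support_of_mem_edges he
  have hc' : (c.rotate u hu).IsCycle := hc.rotate hu
  have he' : s(u, z) ∈ (c.rotate u hu).edges := (c.rotate_edges u hu).mem_iff.mpr he
  have he'' : s(u, z) ∈ (c.rotate u hu).darts.map SimpleGraph.Dart.edge := he'
  obtain ⟨d, hd, hde⟩ := List.mem_map.mp he''
  rw [dart_edge_eq_mk'_iff'] at hde
  rcases hde with h1 | h1
  · exact aux_cycle_dart_fst hc' hd h1.1 h1.2
  · exact aux_cycle_dart_fst (c := (c.rotate u hu).reverse) (aux_isCycle_reverse hc')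
      (d := d.symm) (Walk.mem_darts_reverse.mpr (by simpa using hd)) h1.2 h1.1

lemma aux_mem_verts_of_mem_edge {H : G.Subgraph} {e : Sym2 V} (he : e ∈ H.edgeSet) {z : V}
    (hz : z ∈ e) : z ∈ H.verts := by
  induction e using Sym2.ind with
  | _ x y =>
    rw [SimpleGraph.Subgraph.mem_edgeSet] at he
    rcases Sym2.mem_iff.mp hz with rfl | rfl
    · exact H.edge_vert he
    · exact H.edge_vert he.symm

/-- The ear condition for index `i` in an ear decomposition. -/
def earProp (G : SimpleGraph V) (E : ℕ → G.Subgraph) (i : ℕ) : Prop :=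
  (∃ (u v : V) (w : G.Walk u v), w.IsPath ∧ u ≠ v ∧ E i = w.toSubgraph ∧
    (⋃ j ∈ Set.Iio i, (E j).verts) ∩ (E i).verts = {u, v}) ∨
  (∃ (v : V) (w : G.Walk v v), w.IsCycle ∧ E i = w.toSubgraph ∧
    ∃ x, (⋃ j ∈ Set.Iio i, (E j).verts) ∩ (E i).verts = {x})

lemma aux_step {m : ℕ} {E : ℕ → G.Subgraph} (N : G.Subgraph)
    (hdisj : ∀ i j, i ≤ m → j ≤ m → i ≠ j → Disjoint (E i).edgeSet (E j).edgeSet)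
    (hear : ∀ i, 1 ≤ i → i ≤ m → earProp G E i)
    (hNS : ∀ e ∈ N.edgeSet, e ∉ ⋃ i ∈ Set.Iic m, (E i).edgeSet)
    (hNear :
      (∃ (u v : V) (q : G.Walk u v), q.IsPath ∧ u ≠ v ∧ N = q.toSubgraph ∧
        (⋃ j ∈ Set.Iic m, (E j).verts) ∩ N.verts = {u, v}) ∨
      (∃ (v : V) (q : G.Walk v v), q.IsCycle ∧ N = q.toSubgraph ∧
        ∃ x, (⋃ j ∈ Set.Iic m, (E j).verts) ∩ N.verts = {x})) :
    ∃ E' : ℕ → G.Subgraph, (∀ i ≤ m, E' i = E i) ∧ E' (m + 1) = N ∧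
      (∀ i j, i ≤ m + 1 → j ≤ m + 1 → i ≠ j → Disjoint (E' i).edgeSet (E' j).edgeSet) ∧
      (∀ i, 1 ≤ i → i ≤ m + 1 → earProp G E' i) ∧
      (⋃ i ∈ Set.Iic (m + 1), (E' i).edgeSet) = (⋃ i ∈ Set.Iic m, (E i).edgeSet) ∪ N.edgeSet := by
  classical
  set E' : ℕ → G.Subgraph := Function.update E (m + 1) N with hE'def
  have hagree : ∀ i ≤ m, E' i = E i := fun i hi =>
    Function.update_of_ne (by omega) _ _
  have htop : E' (m + 1) = N := Function.update_self _ _ _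
  refine ⟨E', hagree, htop, ?_, ?_, ?_⟩
  · intro i j hi hj hij
    rcases eq_or_ne i (m + 1) with rfl | hi'
    · have hj' : j ≤ m := by omega
      rw [htop, hagree j hj']
      exact Set.disjoint_left.mpr fun e he hej =>
        hNS e he (Set.mem_biUnion (Set.mem_Iic.mpr hj') hej)
    · have hi'' : i ≤ m := by omega
      rcases eq_or_ne j (m + 1) with rfl | hj'
      · rw [htop, hagree i hi'']
        exact (Set.disjoint_left.mpr fun e he hej =>
          hNS e he (Set.mem_biUnion (Set.mem_Iic.mpr hi'') hej)).symm
      · rw [hagree i hi'', hagree j (by omega)]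
        exact hdisj i j hi'' (by omega) hij
  · intro i h1 hi
    rcases eq_or_ne i (m + 1) with rfl | hi'
    · have hU : (⋃ j ∈ Set.Iio (m + 1), (E' j).verts) = ⋃ j ∈ Set.Iic m, (E j).verts := by
        ext z
        simp only [Set.mem_iUnion, Set.mem_Iio, Set.mem_Iic, Nat.lt_succ_iff, exists_prop]
        constructor
        · rintro ⟨j, hj, hz⟩
          exact ⟨j, hj, by rwa [hagree j hj] at hz⟩
        · rintro ⟨j, hj, hz⟩
          exact ⟨j, hj, by rwa [hagree j hj]⟩
      simp only [earProp]
      rw [htop, hU]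
      exact hNear
    · have hi'' : i ≤ m := by omega
      have hU : (⋃ j ∈ Set.Iio i, (E' j).verts) = ⋃ j ∈ Set.Iio i, (E j).verts := by
        refine Set.iUnion₂_congr fun j hj => ?_
        have := Set.mem_Iio.mp hj
        rw [hagree j (by omega)]
      simp only [earProp]
      rw [hagree i hi'', hU]
      exact hear i h1 hi''
  · ext e
    simp only [Set.mem_iUnion, Set.mem_Iic, Set.mem_union, exists_prop]
    constructor
    · rintro ⟨i, hi, he⟩
      rcases eq_or_ne i (m + 1) with rfl | hi'
      · right; rwa [htop] at he
      · left; exact ⟨i, by omega, by rwa [hagree i (by omega)] at he⟩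
    · rintro (⟨i, hi, he⟩ | he)
      · exact ⟨i, by omega, by rw [hagree i hi]; exact he⟩
      · exact ⟨m + 1, le_rfl, by rwa [htop]⟩

lemma aux_main [Fintype V] (G : SimpleGraph V) (hconn : G.Preconnected)
    (hbridge : ∀ e, ¬ G.IsBridge e) {v : V} (w : G.Walk v v) (hw : w.IsCycle) :
    ∀ (n m : ℕ) (E : ℕ → G.Subgraph), E 0 = w.toSubgraph →
      (∀ i j, i ≤ m → j ≤ m → i ≠ j → Disjoint (E i).edgeSet (E j).edgeSet) →
      (∀ i, 1 ≤ i → i ≤ m → earProp G E i) →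
      (G.edgeSet \ ⋃ i ∈ Set.Iic m, (E i).edgeSet).ncard ≤ n →
      ∃ d : EarDecomp G, d.E 0 = w.toSubgraph := by
  have done : ∀ (m : ℕ) (E : ℕ → G.Subgraph), E 0 = w.toSubgraph →
      (∀ i j, i ≤ m → j ≤ m → i ≠ j → Disjoint (E i).edgeSet (E j).edgeSet) →
      (∀ i, 1 ≤ i → i ≤ m → earProp G E i) →
      G.edgeSet ⊆ (⋃ i ∈ Set.Iic m, (E i).edgeSet) →
      ∃ d : EarDecomp G, d.E 0 = w.toSubgraph := by
    intro m E hE0 hdisj hear hS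
    refine ⟨⟨m, E, ?_, hdisj, ⟨v, w, hw, hE0⟩, fun i h1 h2 => hear i h1 h2⟩, hE0⟩
    intro s
    constructor
    · intro hs
      have := hS hs
      simp only [Set.mem_iUnion, Set.mem_Iic, exists_prop] at this
      exact this
    · rintro ⟨i, _, hsi⟩
      exact (E i).edgeSet_subset hsi
  intro n
  induction n with
  | zero =>
    intro m E hE0 hdisj hear hcard
    by_cases hS : G.edgeSet ⊆ ⋃ i ∈ Set.Iic m, (E i).edgeSet
    · exact done m E hE0 hdisj hear hS
    · exfalso
      obtain ⟨e, he, hes⟩ := Set.not_subset.mp hS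
      have : 0 < (G.edgeSet \ ⋃ i ∈ Set.Iic m, (E i).edgeSet).ncard :=
        (Set.ncard_pos (Set.toFinite _)).mpr ⟨e, he, hes⟩
      omega
  | succ n ih =>
    intro m E hE0 hdisj hear hcard
    by_cases hS : G.edgeSet ⊆ ⋃ i ∈ Set.Iic m, (E i).edgeSet
    · exact done m E hE0 hdisj hear hS
    obtain ⟨e0, he0, he0S⟩ := Set.not_subset.mp hS
    set U : Set V := ⋃ i ∈ Set.Iic m, (E i).verts with hUdef
    have hSU : ∀ e ∈ ⋃ i ∈ Set.Iic m, (E i).edgeSet, ∀ z ∈ e, z ∈ U := by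
      intro e he z hz
      simp only [Set.mem_iUnion, exists_prop] at he
      obtain ⟨i, hi, hei⟩ := he
      exact Set.mem_biUnion hi (aux_mem_verts_of_mem_edge hei hz)
    have hvU : v ∈ U := Set.mem_biUnion (Set.mem_Iic.mpr (Nat.zero_le m))
      (by rw [hE0]; exact w.start_mem_verts_toSubgraph)
    have key : ∀ {a b : V} (p : G.Walk a b),
        (∀ e ∈ p.toSubgraph.edgeSet, e ∉ ⋃ i ∈ Set.Iic m, (E i).edgeSet) →
        ((∃ (u v' : V) (q : G.Walk u v'), q.IsPath ∧ u ≠ v' ∧ p.toSubgraph = q.toSubgraph ∧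
            U ∩ p.toSubgraph.verts = {u, v'}) ∨
         (∃ (v' : V) (q : G.Walk v' v'), q.IsCycle ∧ p.toSubgraph = q.toSubgraph ∧
            ∃ x, U ∩ p.toSubgraph.verts = {x})) →
        (∃ e1, e1 ∈ p.toSubgraph.edgeSet ∧ e1 ∉ ⋃ i ∈ Set.Iic m, (E i).edgeSet) →
        ∃ d : EarDecomp G, d.E 0 = w.toSubgraph := by
      intro a b p hNS hNear hne
      obtain ⟨E', hE'le, _hE'top, hdisj', hear', hS'⟩ :=
        aux_step p.toSubgraph hdisj hear hNS hNear
      apply ih (m + 1) E' (by rw [hE'le 0 (Nat.zero_le m)]; exact hE0) hdisj' hear'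
      obtain ⟨e1, he1, he1S⟩ := hne
      have hlt : (G.edgeSet \ ⋃ i ∈ Set.Iic (m + 1), (E' i).edgeSet).ncard
          < (G.edgeSet \ ⋃ i ∈ Set.Iic m, (E i).edgeSet).ncard := by
        apply Set.ncard_lt_ncard _ (Set.toFinite _)
        rw [hS', Set.ssubset_iff_of_subset
          (Set.diff_subset_diff_right Set.subset_union_left)]
        exact ⟨e1, ⟨p.toSubgraph.edgeSet_subset he1, he1S⟩,
          fun hmem => hmem.2 (Set.mem_union_right _ he1)⟩
      omega
    have grow : ∀ x : V, x ∉ U → ∃ d : EarDecomp G, d.E 0 = w.toSubgraph := by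
      intro x hxU
      obtain ⟨p0⟩ := hconn v x
      obtain ⟨u, z, huU, hzU, huz⟩ := aux_exists_boundary p0 hvU hxU
      have hzuS : s(u, z) ∉ ⋃ i ∈ Set.Iic m, (E i).edgeSet := fun hmem =>
        hzU (hSU _ hmem z (by simp))
      have hcyc : ∃ (v0 : V) (c : G.Walk v0 v0), c.IsCycle ∧ s(u, z) ∈ c.edges := by
        have hb := hbridge s(u, z)
        rw [isBridge_iff_mem_and_forall_cycle_notMem] at hb
        push_neg at hb
        obtain ⟨v0, c, hc1, hc2⟩ := hb
        exact ⟨v0, c, hc1, hc2⟩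
        exact G.mem_edgeSet.mpr huz
      obtain ⟨v0, c, hcyc, hce⟩ := hcyc
      obtain ⟨hadj, q, hq⟩ := aux_exists_cycle_cons hcyc hce
      have hqnodup : q.support.Nodup := by
        have := hq.support_nodup
        rwa [Walk.support_cons, List.tail_cons] at this
      obtain ⟨y, qq, hyU, hpre, hepre, hdrop⟩ := aux_exists_prefix_until q hzU huU
      have hqqnodup : qq.support.Nodup := hqnodup.sublist hpre.sublist
      have hqqlast := List.dropLast_append_getLast (l := qq.support) (by simp)
      rw [qq.getLast_support] at hqqlast
      have hmemqq : ∀ z' ∈ qq.support, z' ∈ U → z' = y := by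
        intro z' hz' hz'U
        rw [← hqqlast] at hz'
        rcases List.mem_append.mp hz' with h | h
        · exact absurd hz'U (hdrop _ h)
        · simpa using h
      have hNS : ∀ e ∈ (Walk.cons hadj qq).toSubgraph.edgeSet,
          e ∉ ⋃ i ∈ Set.Iic m, (E i).edgeSet := by
        intro e he heS
        rw [Walk.mem_edges_toSubgraph, Walk.edges_cons] at he
        rcases List.mem_cons.mp he with rfl | he'
        · exact hzU (hSU _ heS z (by simp))
        · obtain ⟨z', hz'e, hz'U⟩ := aux_edge_endpoint hdrop he'
          exact hz'U (hSU _ heS z' hz'e)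
      have hinter : U ∩ (Walk.cons hadj qq).toSubgraph.verts = {u, y} := by
        ext z'
        simp only [Set.mem_inter_iff, Walk.mem_verts_toSubgraph, Walk.support_cons,
          List.mem_cons, Set.mem_insert_iff, Set.mem_singleton_iff]
        constructor
        · rintro ⟨hz'U, rfl | hz'⟩
          · exact Or.inl rfl
          · exact Or.inr (hmemqq _ hz' hz'U)
        · rintro (rfl | rfl)
          · exact ⟨huU, Or.inl rfl⟩
          · exact ⟨hyU, Or.inr qq.end_mem_support⟩
      have hne1 : s(u, z) ∈ (Walk.cons hadj qq).toSubgraph.edgeSet := by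
        rw [Walk.mem_edges_toSubgraph, Walk.edges_cons]
        exact List.mem_cons_self
      by_cases hyu : y = u
      · subst hyu
        apply key (Walk.cons hadj qq) hNS _ ⟨s(y, z), hne1, hzuS⟩
        right
        refine ⟨y, Walk.cons hadj qq, ?_, rfl, y, by rw [hinter]; simp⟩
        have hqedges : q.edges.Nodup ∧ s(y, z) ∉ q.edges := by
          have h2 := hq.isCircuit.isTrail.edges_nodup
          rw [Walk.edges_cons, List.nodup_cons] at h2
          exact ⟨h2.2, h2.1⟩
        refine ⟨⟨⟨?_⟩, by simp⟩, ?_⟩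
        · rw [Walk.edges_cons, List.nodup_cons]
          refine ⟨fun hmem => hqedges.2 (hepre.sublist.subset hmem),
            hqedges.1.sublist hepre.sublist⟩
        · rw [Walk.support_cons, List.tail_cons]
          exact hqqnodup
      · have huqq : u ∉ qq.support := fun hu => hyu ((hmemqq u hu huU).symm)
        apply key (Walk.cons hadj qq) hNS _ ⟨s(u, z), hne1, hzuS⟩
        left
        refine ⟨u, y, Walk.cons hadj qq, ?_, fun h => hyu h.symm, rfl, hinter⟩
        rw [Walk.isPath_def, Walk.support_cons]
        exact List.nodup_cons.mpr ⟨huqq, hqqnodup⟩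
    induction e0 using Sym2.ind with
    | _ a b =>
      have hab : G.Adj a b := G.mem_edgeSet.mp he0
      by_cases haU : a ∈ U
      · by_cases hbU : b ∈ U
        · apply key (Walk.cons hab Walk.nil) ?_ ?_ ⟨s(a, b), ?_, he0S⟩
          · intro e he heS
            rw [Walk.mem_edges_toSubgraph] at he
            simp only [Walk.edges_cons, Walk.edges_nil, List.mem_singleton] at he
            subst he
            exact he0S heS
          · left
            refine ⟨a, b, Walk.cons hab Walk.nil, ?_, hab.ne, rfl, ?_⟩
            · rw [Walk.isPath_def]
              simp [hab.ne]
            · ext z'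
              simp only [Set.mem_inter_iff, Walk.mem_verts_toSubgraph, Walk.support_cons,
                Walk.support_nil, List.mem_cons, List.mem_singleton, List.not_mem_nil,
                Set.mem_insert_iff, Set.mem_singleton_iff]
              constructor
              · rintro ⟨-, h⟩
                simpa using h
              · rintro (rfl | rfl)
                · exact ⟨haU, by simp⟩
                · exact ⟨hbU, by simp⟩
          · rw [Walk.mem_edges_toSubgraph]
            simp
        · exact grow b hbU
      · exact grow a haU

end EarAux

/-- a 2-edge-connected graph has an ear decomposition with any prescribed
cycle as the initial cycle. -/
theorem stmt_8 {V : Type*} [Fintype V] (G : SimpleGraph V)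
    (hconn : G.Connected) (hcard : 2 ≤ Fintype.card V)
    (hbridge : ∀ e, ¬ G.IsBridge e)
    (v : V) (w : G.Walk v v) (hw : w.IsCycle) :
    ∃ d : EarDecomp G, d.E 0 = w.toSubgraph := by
  classical
  exact aux_main G hconn.preconnected hbridge w hw
    ((G.edgeSet \ ⋃ i ∈ Set.Iic 0, ((fun _ => w.toSubgraph) i).edgeSet).ncard)
    0 (fun _ => w.toSubgraph) rfl
    (fun i j hi hj hij => by omega)
    (fun i h1 h2 => by omega)
    le_rfl
end

section
/- Let K be a clique of a graph G, and let m ≥ 2Δ(G) − |K| + 3 be an integer. If G − K has an odd m-coloring, then G has an odd m-coloring. -/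
open SimpleGraph

variable {V : Type*}

section Aux
open Finset
set_option linter.unusedSectionVars false
attribute [local instance] Classical.propDecidable

variable {V : Type*} [Fintype V]

private lemma setOf_ncard_eq (p : V → Prop) :
    {x | p x}.ncard = (Finset.univ.filter p).card := by
  rw [← Set.ncard_coe_finset]; congr 1; ext x; simp

section Greedy

private def tgt (k i : ℕ) : ℕ := if i + 1 = k then 0 else i + 1
private def bnd (k i : ℕ) : ℕ := if i + 1 = k then 1 else k - 1 - i

private noncomputable def Useds (g : ℕ → ℕ) (i : ℕ) : Finset ℕ := (Finset.range i).image g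

private noncomputable def Grds (Ee : ℕ → Finset ℕ) (k : ℕ) (g : ℕ → ℕ) (i : ℕ) : Finset ℕ :=
  if (Ee (tgt k i) \ Useds g i).card ≤ bnd k i then Ee (tgt k i) \ Useds g i else ∅

private noncomputable def Forbs (Fb Ee : ℕ → Finset ℕ) (k : ℕ) (g : ℕ → ℕ) (i : ℕ) : Finset ℕ :=
  Fb i ∪ Useds g i ∪ Grds Ee k g i

private noncomputable def picks (m : ℕ) (Fb Ee : ℕ → Finset ℕ) (k : ℕ) (g : ℕ → ℕ) (i : ℕ) : ℕ :=
  if h : ((Finset.range m) \ Forbs Fb Ee k g i).Nonempty then h.choose else 0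

private noncomputable def FFs (m : ℕ) (Fb Ee : ℕ → Finset ℕ) (k : ℕ) : ℕ → (ℕ → ℕ)
  | 0 => fun _ => 0
  | n+1 => Function.update (FFs m Fb Ee k n) n (picks m Fb Ee k (FFs m Fb Ee k n) n)

private noncomputable def ffs (m : ℕ) (Fb Ee : ℕ → Finset ℕ) (k : ℕ) (i : ℕ) : ℕ :=
  FFs m Fb Ee k (i+1) i

private lemma FFs_agree (m : ℕ) (Fb Ee : ℕ → Finset ℕ) (k : ℕ) :
    ∀ {n i : ℕ}, i < n → FFs m Fb Ee k n i = ffs m Fb Ee k i := by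
  intro n
  induction n with
  | zero => intro i h; omega
  | succ n ih =>
    intro i h
    rcases Nat.lt_succ_iff_lt_or_eq.mp h with h' | rfl
    · have : FFs m Fb Ee k (n+1) i = FFs m Fb Ee k n i := by
        show Function.update (FFs m Fb Ee k n) n _ i = _
        rw [Function.update_of_ne (by omega)]
      rw [this, ih h']
    · rfl

private lemma Useds_eq (m : ℕ) (Fb Ee : ℕ → Finset ℕ) (k i : ℕ) :
    Useds (FFs m Fb Ee k i) i = Useds (ffs m Fb Ee k) i := by
  unfold Useds
  apply Finset.image_congr
  intro j hj
  simp only [Finset.coe_range, Set.mem_Iio] at hj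
  exact FFs_agree m Fb Ee k hj

private lemma Forbs_eq (m : ℕ) (Fb Ee : ℕ → Finset ℕ) (k i : ℕ) :
    Forbs Fb Ee k (FFs m Fb Ee k i) i = Forbs Fb Ee k (ffs m Fb Ee k) i := by
  unfold Forbs Grds
  rw [Useds_eq]

private lemma ffs_spec (m : ℕ) (Fb Ee : ℕ → Finset ℕ) (k i : ℕ)
    (h : ((Finset.range m) \ Forbs Fb Ee k (ffs m Fb Ee k) i).Nonempty) :
    ffs m Fb Ee k i ∈ (Finset.range m) \ Forbs Fb Ee k (ffs m Fb Ee k) i := by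
  have h2 : ((Finset.range m) \ Forbs Fb Ee k (FFs m Fb Ee k i) i).Nonempty := by
    rw [Forbs_eq]; exact h
  have heq : ffs m Fb Ee k i = picks m Fb Ee k (FFs m Fb Ee k i) i := by
    show Function.update (FFs m Fb Ee k i) i _ i = _
    rw [Function.update_self]
  rw [heq, picks, dif_pos h2, ← Forbs_eq]
  exact h2.choose_spec

end Greedy

variable (G : SimpleGraph V) (K : Finset V)

private noncomputable def MWs (c : V → ℕ) (v : V) (a : ℕ) : Finset V :=
  Finset.univ.filter fun w => G.Adj v w ∧ w ∉ K ∧ c w = a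

private noncomputable def MKs (c : V → ℕ) (v : V) (a : ℕ) : Finset V :=
  Finset.univ.filter fun w => G.Adj v w ∧ w ∈ K ∧ c w = a

private lemma colMult_split (c : V → ℕ) (v : V) (a : ℕ) :
    colMult G c v a = (MWs G K c v a).card + (MKs G K c v a).card := by
  classical
  rw [colMult, setOf_ncard_eq, MWs, MKs, ← Finset.card_union_of_disjoint]
  · congr 1
    ext w
    simp only [Finset.mem_filter, Finset.mem_union, Finset.mem_univ, true_and]
    tauto
  · rw [Finset.disjoint_left]
    intro w hw hw'
    simp only [Finset.mem_filter] at hw hw'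
    exact hw.2.2.1 hw'.2.2.1

private lemma MWs_congr {c c' : V → ℕ} (h : ∀ w, w ∉ K → c w = c' w) (v : V) (a : ℕ) :
    MWs G K c v a = MWs G K c' v a := by
  unfold MWs
  apply Finset.filter_congr
  intro w _
  by_cases hw : w ∉ K
  · simp [hw, h w hw]
  · simp only [not_not] at hw
    simp [hw]

private lemma MKs_congr {c c' : V → ℕ} (h : ∀ w, w ∈ K → c w = c' w) (v : V) (a : ℕ) :
    MKs G K c v a = MKs G K c' v a := by
  unfold MKs
  apply Finset.filter_congr
  intro w _
  by_cases hw : w ∈ K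
  · simp [hw, h w hw]
  · simp [hw]

private noncomputable def nbrF (v : V) : Finset V := Finset.univ.filter fun w => G.Adj v w

private lemma deg_eq_nbrF (v : V) : deg G v = (nbrF G v).card := by
  rw [deg, nbrF, ← setOf_ncard_eq]
  rfl

private lemma deg_le_maxDeg (v : V) : deg G v ≤ maxDeg G := by
  apply le_csSup
  · exact Set.Finite.bddAbove (Set.finite_range _)
  · exact ⟨v, rfl⟩

variable (c₀ : ((K : Set V)ᶜ : Set V) → ℕ)

private noncomputable def cVd : V → ℕ :=
  fun w => if h : w ∈ ((K : Set V)ᶜ) then c₀ ⟨w, h⟩ else 0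

private lemma cVd_eq {w : V} (h : w ∉ K) : cVd K c₀ w = c₀ ⟨w, by simp [h]⟩ := dif_pos _

private lemma transfer_colMult (u : V) (hu : u ∉ K) (a : ℕ) :
    colMult (G.induce ((K : Set V)ᶜ)) c₀ ⟨u, by simp [hu]⟩ a
      = (MWs G K (cVd K c₀) u a).card := by
  classical
  rw [colMult, ← Set.ncard_coe_finset (MWs G K (cVd K c₀) u a)]
  rw [← Set.ncard_image_of_injective _ (Subtype.val_injective (p := fun x => x ∈ ((K : Set V)ᶜ)))]
  congr 1
  ext w
  simp only [Set.mem_image, Set.mem_setOf_eq, Finset.coe_filter, MWs, Finset.mem_univ, true_and,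
    Subtype.exists, SimpleGraph.comap_adj, Function.Embedding.coe_subtype, exists_and_right,
    exists_eq_right]
  constructor
  · rintro ⟨hw, hadj, hca⟩
    have hwK : w ∉ K := by simpa using hw
    refine ⟨hadj, hwK, ?_⟩
    rw [cVd_eq K c₀ hwK]
    exact hca
  · rintro ⟨hadj, hwK, hca⟩
    refine ⟨by simpa using hwK, hadj, ?_⟩
    rw [cVd_eq K c₀ hwK] at hca
    exact hca

private lemma transfer_adj (u : V) (hu : u ∉ K) :
    (∃ q, (G.induce ((K : Set V)ᶜ)).Adj ⟨u, by simp [hu]⟩ q) ↔ (∃ w, G.Adj u w ∧ w ∉ K) := by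
  constructor
  · rintro ⟨⟨w, hw⟩, hadj⟩
    exact ⟨w, by simpa using hadj, by simpa using hw⟩
  · rintro ⟨w, hadj, hw⟩
    exact ⟨⟨w, by simp [hw]⟩, by simpa using hadj⟩

private noncomputable def nbrWs (v : V) : Finset V :=
  Finset.univ.filter fun w => G.Adj v w ∧ w ∉ K

private noncomputable def nbrWWs (v : V) : Finset V :=
  Finset.univ.filter fun w => G.Adj v w ∧ w ∉ K ∧ ∃ w', G.Adj w w' ∧ w' ∉ K

private noncomputable def aas : V → ℕ := fun u =>
  if h : ∃ a, Odd ((MWs G K (cVd K c₀) u a).card) then h.choose else 0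

private noncomputable def Fbs (v : V) : Finset ℕ :=
  (nbrWs G K v).image (cVd K c₀) ∪ (nbrWWs G K v).image (aas G K c₀)

private noncomputable def OddWs (m : ℕ) (v : V) : Finset ℕ :=
  (Finset.range m).filter fun a => Odd ((MWs G K (cVd K c₀) v a).card)

private lemma aas_spec (hc₀ : IsOddCol (G.induce ((K : Set V)ᶜ)) m c₀)
    (u : V) (hu : u ∉ K) (h : ∃ w', G.Adj u w' ∧ w' ∉ K) :
    Odd ((MWs G K (cVd K c₀) u (aas G K c₀ u)).card) := by
  have hex : ∃ a, Odd ((MWs G K (cVd K c₀) u a).card) := by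
    obtain ⟨a, ha⟩ := hc₀.2 ⟨u, by simp [hu]⟩ ((transfer_adj G K u hu).mpr h)
    exact ⟨a, by rwa [transfer_colMult G K c₀ u hu a] at ha⟩
  rw [aas, dif_pos hex]
  exact hex.choose_spec

section Verify
variable (m : ℕ) (vt : ℕ → V) (f : ℕ → ℕ) (c : V → ℕ)

private lemma clique_adj (hK : G.IsClique (K : Set V)) {u w : V} (hu : u ∈ K) (hw : w ∈ K)
    (hne : u ≠ w) : G.Adj u w := hK (by simpa using hu) (by simpa using hw) hne

private lemma Fb_not_cV (hf_Fb : ∀ i, i < K.card → f i ∉ Fbs G K c₀ (vt i)) :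
    ∀ i, i < K.card → ∀ w, G.Adj (vt i) w → w ∉ K → f i ≠ cVd K c₀ w := by
  intro i hi w hadj hwK heq
  apply hf_Fb i hi
  rw [Fbs, Finset.mem_union]
  left
  rw [Finset.mem_image]
  exact ⟨w, by simp [nbrWs, hadj, hwK], heq.symm⟩

private lemma Fb_not_aa (hf_Fb : ∀ i, i < K.card → f i ∉ Fbs G K c₀ (vt i)) :
    ∀ i, i < K.card → ∀ w, G.Adj (vt i) w → w ∉ K → (∃ w', G.Adj w w' ∧ w' ∉ K) →
      f i ≠ aas G K c₀ w := by
  intro i hi w hadj hwK hww heq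
  apply hf_Fb i hi
  rw [Fbs, Finset.mem_union]
  right
  rw [Finset.mem_image]
  exact ⟨w, by simp only [nbrWWs, Finset.mem_filter, Finset.mem_univ, true_and]; exact ⟨hadj, hwK, hww⟩, heq.symm⟩

private lemma ext_lt
    (hc₀ : IsOddCol (G.induce ((K : Set V)ᶜ)) m c₀)
    (hcW : ∀ w, w ∉ K → c w = cVd K c₀ w)
    (hcK : ∀ i, i < K.card → c (vt i) = f i)
    (hvt_surj : ∀ w, w ∈ K → ∃ i, i < K.card ∧ vt i = w)
    (hf_lt : ∀ i, i < K.card → f i < m) :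
    ∀ v, c v < m := by
  intro v
  by_cases hv : v ∈ K
  · obtain ⟨i, hi, rfl⟩ := hvt_surj v hv
    rw [hcK i hi]
    exact hf_lt i hi
  · rw [hcW v hv, cVd_eq K c₀ hv]
    exact hc₀.1.1 _

private lemma ext_proper
    (hK : G.IsClique (K : Set V))
    (hc₀ : IsOddCol (G.induce ((K : Set V)ᶜ)) m c₀)
    (hcW : ∀ w, w ∉ K → c w = cVd K c₀ w)
    (hcK : ∀ i, i < K.card → c (vt i) = f i)
    (hvt_surj : ∀ w, w ∈ K → ∃ i, i < K.card ∧ vt i = w)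
    (hf_inj : ∀ i j, i < K.card → j < K.card → i ≠ j → f i ≠ f j)
    (hf_Fb : ∀ i, i < K.card → f i ∉ Fbs G K c₀ (vt i)) :
    ∀ u w, G.Adj u w → c u ≠ c w := by
  intro u w hadj
  by_cases hu : u ∈ K <;> by_cases hw : w ∈ K
  · obtain ⟨i, hi, rfl⟩ := hvt_surj u hu
    obtain ⟨j, hj, rfl⟩ := hvt_surj w hw
    rw [hcK i hi, hcK j hj]
    apply hf_inj i j hi hj
    intro h
    subst h
    exact G.ne_of_adj hadj rfl
  · obtain ⟨i, hi, rfl⟩ := hvt_surj u hu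
    rw [hcK i hi, hcW w hw]
    exact Fb_not_cV G K c₀ vt f hf_Fb i hi w hadj hw
  · obtain ⟨j, hj, rfl⟩ := hvt_surj w hw
    rw [hcK j hj, hcW u hu]
    exact (Fb_not_cV G K c₀ vt f hf_Fb j hj u hadj.symm hu).symm
  · rw [hcW u hu, hcW w hw, cVd_eq K c₀ hu, cVd_eq K c₀ hw]
    exact hc₀.1.2 ⟨u, by simp [hu]⟩ ⟨w, by simp [hw]⟩ (by simpa using hadj)

private lemma ext_W_odd
    (hK : G.IsClique (K : Set V))
    (hc₀ : IsOddCol (G.induce ((K : Set V)ᶜ)) m c₀)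
    (hcW : ∀ w, w ∉ K → c w = cVd K c₀ w)
    (hcK : ∀ i, i < K.card → c (vt i) = f i)
    (hvt_surj : ∀ w, w ∈ K → ∃ i, i < K.card ∧ vt i = w)
    (hf_inj : ∀ i j, i < K.card → j < K.card → i ≠ j → f i ≠ f j)
    (hf_Fb : ∀ i, i < K.card → f i ∉ Fbs G K c₀ (vt i)) :
    ∀ u, u ∉ K → (∃ w, G.Adj u w) → ∃ a, Odd (colMult G c u a) := by
  rintro u hu ⟨w₀, hw₀⟩
  by_cases hWnbr : ∃ w, G.Adj u w ∧ w ∉ K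
  · refine ⟨aas G K c₀ u, ?_⟩
    rw [colMult_split G K c, MWs_congr G K (fun w h => hcW w h)]
    have hMK : MKs G K c u (aas G K c₀ u) = ∅ := by
      rw [Finset.eq_empty_iff_forall_notMem]
      intro w hwmem
      simp only [MKs, Finset.mem_filter, Finset.mem_univ, true_and] at hwmem
      obtain ⟨hadj, hwK, hcw⟩ := hwmem
      obtain ⟨j, hj, rfl⟩ := hvt_surj w hwK
      rw [hcK j hj] at hcw
      exact Fb_not_aa G K c₀ vt f hf_Fb j hj u hadj.symm hu hWnbr hcw
    rw [hMK]
    simp only [Finset.card_empty, Nat.add_zero]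
    exact aas_spec G K c₀ (m := m) hc₀ u hu hWnbr
  · push_neg at hWnbr
    have hw₀K : w₀ ∈ K := hWnbr w₀ hw₀
    obtain ⟨j, hj, rfl⟩ := hvt_surj w₀ hw₀K
    refine ⟨f j, ?_⟩
    rw [colMult_split G K c]
    have h0 : MWs G K c u (f j) = ∅ := by
      rw [Finset.eq_empty_iff_forall_notMem]
      intro w hwmem
      simp only [MWs, Finset.mem_filter, Finset.mem_univ, true_and] at hwmem
      exact hwmem.2.1 (hWnbr w hwmem.1)
    have h1 : MKs G K c u (f j) = {vt j} := by
      ext w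
      simp only [MKs, Finset.mem_filter, Finset.mem_univ, true_and, Finset.mem_singleton]
      constructor
      · rintro ⟨hadj, hwK, hcw⟩
        obtain ⟨j', hj', rfl⟩ := hvt_surj w hwK
        rw [hcK j' hj'] at hcw
        by_contra hne
        have : j' ≠ j := fun h => hne (by rw [h])
        exact hf_inj j' j hj' hj this hcw
      · rintro rfl
        exact ⟨hw₀, hw₀K, hcK j hj⟩
    rw [h0, h1]
    simp
end Verify

section Verify2
variable (m : ℕ) (vt : ℕ → V) (f : ℕ → ℕ) (c : V → ℕ)

private lemma MKs_clique_card
    (hK : G.IsClique (K : Set V))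
    (hcK : ∀ i, i < K.card → c (vt i) = f i)
    (hvt_mem : ∀ i, i < K.card → vt i ∈ K)
    (hvt_inj : ∀ i j, i < K.card → j < K.card → vt i = vt j → i = j)
    (hvt_surj : ∀ w, w ∈ K → ∃ i, i < K.card ∧ vt i = w)
    (hf_inj : ∀ i j, i < K.card → j < K.card → i ≠ j → f i ≠ f j)
    (l : ℕ) (hl : l < K.card) (a : ℕ) :
    (MKs G K c (vt l) a).card
      = if a ∈ (((Finset.range K.card).image f).erase (f l)) then 1 else 0 := by
  by_cases ha : a ∈ (((Finset.range K.card).image f).erase (f l))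
  · rw [if_pos ha]
    rw [Finset.mem_erase, Finset.mem_image] at ha
    obtain ⟨hne, j, hj, rfl⟩ := ha
    rw [Finset.mem_range] at hj
    have hjl : j ≠ l := fun h => hne (by rw [h])
    have : MKs G K c (vt l) (f j) = {vt j} := by
      ext w
      simp only [MKs, Finset.mem_filter, Finset.mem_univ, true_and, Finset.mem_singleton]
      constructor
      · rintro ⟨hadj, hwK, hcw⟩
        obtain ⟨j', hj', rfl⟩ := hvt_surj w hwK
        rw [hcK j' hj'] at hcw
        by_contra hne'
        have : j' ≠ j := fun h => hne' (by rw [h])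
        exact hf_inj j' j hj' hj this hcw
      · rintro rfl
        have hne2 : vt l ≠ vt j := fun h => hjl (hvt_inj l j hl hj h).symm
        exact ⟨clique_adj G K hK (hvt_mem l hl) (hvt_mem j hj) hne2, hvt_mem j hj, hcK j hj⟩
    rw [this, Finset.card_singleton]
  · rw [if_neg ha]
    rw [Finset.card_eq_zero, Finset.eq_empty_iff_forall_notMem]
    intro w hwmem
    simp only [MKs, Finset.mem_filter, Finset.mem_univ, true_and] at hwmem
    obtain ⟨hadj, hwK, hcw⟩ := hwmem
    obtain ⟨j', hj', rfl⟩ := hvt_surj w hwK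
    rw [hcK j' hj'] at hcw
    apply ha
    rw [Finset.mem_erase, ← hcw]
    constructor
    · intro h
      have hjl : j' ≠ l := by
        intro h'
        subst h'
        exact G.ne_of_adj hadj.symm rfl
      exact hf_inj j' l hj' hl hjl h
    · rw [Finset.mem_image]
      exact ⟨j', Finset.mem_range.mpr hj', rfl⟩

private lemma unhappy_eq
    (hK : G.IsClique (K : Set V))
    (hcW : ∀ w, w ∉ K → c w = cVd K c₀ w)
    (hcK : ∀ i, i < K.card → c (vt i) = f i)
    (hvt_mem : ∀ i, i < K.card → vt i ∈ K)
    (hvt_inj : ∀ i j, i < K.card → j < K.card → vt i = vt j → i = j)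
    (hvt_surj : ∀ w, w ∈ K → ∃ i, i < K.card ∧ vt i = w)
    (hf_lt : ∀ i, i < K.card → f i < m)
    (hf_inj : ∀ i j, i < K.card → j < K.card → i ≠ j → f i ≠ f j)
    (l : ℕ) (hl : l < K.card)
    (hun : ∀ a, ¬ Odd (colMult G c (vt l) a)) :
    OddWs G K c₀ m (vt l) = ((Finset.range K.card).image f).erase (f l) := by
  ext a
  have hsplit := colMult_split G K c (vt l) a
  rw [MWs_congr G K (fun w h => hcW w h)] at hsplit
  have hMK := MKs_clique_card G K vt f c hK hcK hvt_mem hvt_inj hvt_surj hf_inj l hl a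
  have hun' := hun a
  rw [hsplit, hMK] at hun'
  constructor
  · intro hmem
    rw [OddWs, Finset.mem_filter] at hmem
    by_contra hnot
    rw [if_neg hnot] at hun'
    exact hun' (by simpa using hmem.2)
  · intro hmem
    rw [if_pos hmem] at hun'
    rw [OddWs, Finset.mem_filter]
    constructor
    · rw [Finset.mem_erase, Finset.mem_image] at hmem
      obtain ⟨_, j, hj, rfl⟩ := hmem
      exact Finset.mem_range.mpr (hf_lt j (Finset.mem_range.mp hj))
    · rw [Nat.odd_iff] at hun' ⊢
      omega

private lemma kill_core
    (hk2 : 2 ≤ K.card)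
    (hf_inj : ∀ i j, i < K.card → j < K.card → i ≠ j → f i ≠ f j)
    (hf_used : ∀ i, i < K.card → f i ∉ Useds f i)
    (hf_grd : ∀ i, i < K.card → f i ∉ Grds (fun j => OddWs G K c₀ m (vt j)) K.card f i)
    (l : ℕ) (hl : l < K.card)
    (i sv : ℕ) (hik : i < K.card) (hil : i ≠ l) (htgt : tgt K.card i = l)
    (hsv : (if l < i then i - 1 else i) = sv)
    (hfin : K.card - 1 - sv ≤ bnd K.card i) :
    OddWs G K c₀ m (vt l) ≠ ((Finset.range K.card).image f).erase (f l) := by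
  intro heq
  have hfinj' : Set.InjOn f (Finset.range K.card) := by
    intro x hx y hy hxy
    by_contra hne
    exact hf_inj x y (by simpa using hx) (by simpa using hy) hne hxy
  set X := (Finset.range K.card).image f with hX
  have hcardX : X.card = K.card := by
    rw [hX, Finset.card_image_of_injOn hfinj', Finset.card_range]
  have hflX : f l ∈ X := Finset.mem_image.mpr ⟨l, Finset.mem_range.mpr hl, rfl⟩
  have hcardXe : (X.erase (f l)).card = K.card - 1 := by
    rw [Finset.card_erase_of_mem hflX, hcardX]
  have hfiX : f i ∈ X.erase (f l) :=
    Finset.mem_erase.mpr ⟨hf_inj i l hik hl hil,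
      Finset.mem_image.mpr ⟨i, Finset.mem_range.mpr hik, rfl⟩⟩
  have hfiT : f i ∈ OddWs G K c₀ m (vt l) \ Useds f i := by
    rw [heq, Finset.mem_sdiff]
    exact ⟨hfiX, hf_used i hik⟩
  have hgrd := hf_grd i hik
  rw [Grds, htgt] at hgrd
  by_cases hcase : ((OddWs G K c₀ m (vt l)) \ Useds f i).card ≤ bnd K.card i
  · rw [if_pos hcase] at hgrd
    exact hgrd hfiT
  · apply hcase
    set S := ((Finset.range i).erase l).image f with hS
    have hSsub1 : S ⊆ X.erase (f l) := by
      intro x hx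
      rw [hS, Finset.mem_image] at hx
      obtain ⟨j, hj, rfl⟩ := hx
      rw [Finset.mem_erase, Finset.mem_range] at hj
      refine Finset.mem_erase.mpr ⟨hf_inj j l (by omega) hl hj.1, ?_⟩
      exact Finset.mem_image.mpr ⟨j, Finset.mem_range.mpr (by omega), rfl⟩
    have hSsub2 : S ⊆ Useds f i :=
      Finset.image_subset_image (Finset.erase_subset l (Finset.range i))
    have hTsub : (OddWs G K c₀ m (vt l)) \ Useds f i ⊆ (X.erase (f l)) \ S := by
      rw [heq]
      exact Finset.sdiff_subset_sdiff (le_refl _) hSsub2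
    have hcardS : S.card = ((Finset.range i).erase l).card := by
      rw [hS]
      apply Finset.card_image_of_injOn
      intro x hx y hy hxy
      simp only [Finset.coe_erase, Set.mem_diff, Finset.coe_range, Set.mem_Iio] at hx hy
      exact hfinj' (by simp only [Finset.coe_range, Set.mem_Iio]; omega)
        (by simp only [Finset.coe_range, Set.mem_Iio]; omega) hxy
    have hbound : ((OddWs G K c₀ m (vt l)) \ Useds f i).card ≤ (K.card - 1) - S.card := by
      calc ((OddWs G K c₀ m (vt l)) \ Useds f i).card ≤ ((X.erase (f l)) \ S).card :=
            Finset.card_le_card hTsub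
        _ = (X.erase (f l)).card - S.card := Finset.card_sdiff_of_subset hSsub1
        _ = (K.card - 1) - S.card := by rw [hcardXe]
    have hcardS' : ((Finset.range i).erase l).card = sv := by
      rw [← hsv]
      by_cases hli : l < i
      · rw [if_pos hli, Finset.card_erase_of_mem (Finset.mem_range.mpr hli), Finset.card_range]
      · rw [if_neg hli]
        rw [Finset.erase_eq_of_notMem (by rw [Finset.mem_range]; omega), Finset.card_range]
    omega

private lemma kill_lemma
    (hk2 : 2 ≤ K.card)
    (hf_inj : ∀ i j, i < K.card → j < K.card → i ≠ j → f i ≠ f j)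
    (hf_used : ∀ i, i < K.card → f i ∉ Useds f i)
    (hf_grd : ∀ i, i < K.card → f i ∉ Grds (fun j => OddWs G K c₀ m (vt j)) K.card f i)
    (l : ℕ) (hl : l < K.card) :
    OddWs G K c₀ m (vt l) ≠ ((Finset.range K.card).image f).erase (f l) := by
  rcases Nat.eq_zero_or_pos l with h0 | h1
  · subst h0
    exact kill_core G K c₀ m vt f hk2 hf_inj hf_used hf_grd 0 hl (K.card - 1) (K.card - 2)
      (by omega) (by omega)
      (by rw [tgt, if_pos (by omega)])
      (by rw [if_pos (by omega)]; omega)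
      (by rw [bnd, if_pos (by omega)]; omega)
  · exact kill_core G K c₀ m vt f hk2 hf_inj hf_used hf_grd l hl (l - 1) (l - 1)
      (by omega) (by omega)
      (by rw [tgt, if_neg (by omega)]; omega)
      (by rw [if_neg (by omega)])
      (by rw [bnd, if_neg (by omega)])

end Verify2

section Recolor

private noncomputable def Ms (c : V → ℕ) (z : V) (a : ℕ) : Finset V :=
  Finset.univ.filter fun w => G.Adj z w ∧ c w = a

private lemma colMult_eq_Ms (c : V → ℕ) (z : V) (a : ℕ) :
    colMult G c z a = (Ms G c z a).card := by
  rw [colMult, setOf_ncard_eq]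
  congr 1
  ext w
  simp [Ms]

private lemma recolor_fix (m : ℕ) (c : V → ℕ) (v u : V)
    (hlt : ∀ w, c w < m)
    (hprop : ∀ x y, G.Adj x y → c x ≠ c y)
    (hhappy : ∀ z, z ≠ v → (∃ w, G.Adj z w) → ∃ a, Odd (colMult G c z a))
    (hveven : ∀ a, ¬ Odd (colMult G c v a))
    (hu : G.Adj v u)
    (hdeg : 2 * deg G u + 2 ≤ m) :
    ∃ c', IsOddCol G m c' := by
  classical
  set α := c u with hα_def
  set Oc : V → Finset ℕ := fun z => (Finset.range m).filter (fun a => Odd (colMult G c z a))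
    with hOc_def
  set TT : Finset ℕ := (nbrF G u).biUnion
    (fun w => (Finset.range m).filter (fun b' => Oc w = insert α {b'})) with hTT_def
  set Forb : Finset ℕ := (nbrF G u).image c ∪ {α} ∪ TT with hForb_def
  have hTTcard : TT.card ≤ (nbrF G u).card := by
    calc TT.card ≤ ∑ w ∈ nbrF G u, ((Finset.range m).filter (fun b' => Oc w = insert α {b'})).card :=
          Finset.card_biUnion_le
      _ ≤ ∑ w ∈ nbrF G u, 1 := by
          apply Finset.sum_le_sum
          intro w _
          rw [Finset.card_le_one]
          intro b1 hb1 b2 hb2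
          rw [Finset.mem_filter] at hb1 hb2
          have h12 : insert α ({b1} : Finset ℕ) = insert α {b2} := by rw [← hb1.2, hb2.2]
          have : b1 ∈ insert α ({b2} : Finset ℕ) := by
            rw [← h12]; simp
          rcases Finset.mem_insert.mp this with h | h
          · subst h
            have hmem : b2 ∈ insert α ({b2} : Finset ℕ) := by simp
            rw [← h12] at hmem
            have : b2 = α := by simpa using hmem
            exact this.symm
          · simpa using h
      _ = (nbrF G u).card := by simp
  have hForbcard : Forb.card < m := by
    have h1 : ((nbrF G u).image c).card ≤ (nbrF G u).card := Finset.card_image_le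
    have h2 : Forb.card ≤ ((nbrF G u).image c).card + 1 + TT.card := by
      calc Forb.card ≤ ((nbrF G u).image c ∪ {α}).card + TT.card := Finset.card_union_le _ _
        _ ≤ (((nbrF G u).image c).card + ({α} : Finset ℕ).card) + TT.card :=
            Nat.add_le_add_right (Finset.card_union_le _ _) _
        _ = ((nbrF G u).image c).card + 1 + TT.card := by simp
    have h3 : deg G u = (nbrF G u).card := deg_eq_nbrF G u
    omega
  have hbex : ((Finset.range m) \ Forb).Nonempty := by
    by_contra hne
    rw [Finset.not_nonempty_iff_eq_empty, Finset.sdiff_eq_empty_iff_subset] at hne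
    have := Finset.card_le_card hne
    rw [Finset.card_range] at this
    omega
  obtain ⟨b, hb⟩ := hbex
  rw [Finset.mem_sdiff, Finset.mem_range] at hb
  obtain ⟨hbm, hbForb⟩ := hb
  have hbnbr : ∀ w, G.Adj u w → b ≠ c w := by
    intro w hw heq
    apply hbForb
    rw [hForb_def, Finset.mem_union, Finset.mem_union]
    left; left
    exact Finset.mem_image.mpr ⟨w, by simp [nbrF, hw], heq.symm⟩
  have hbα : b ≠ α := by
    intro heq
    apply hbForb
    rw [hForb_def, Finset.mem_union, Finset.mem_union]
    left; right
    simp [heq]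
  have hbTT : ∀ w, G.Adj u w → Oc w ≠ insert α {b} := by
    intro w hw heq
    apply hbForb
    rw [hForb_def, Finset.mem_union]
    right
    rw [hTT_def, Finset.mem_biUnion]
    exact ⟨w, by simp [nbrF, hw], by rw [Finset.mem_filter]; exact ⟨Finset.mem_range.mpr hbm, heq⟩⟩
  set c' := Function.update c u b with hc'_def
  have hc'u : c' u = b := Function.update_self u b c
  have hc'w : ∀ w, w ≠ u → c' w = c w := fun w hw => Function.update_of_ne hw b c
  -- set change lemmas
  have hMeq_nadj : ∀ z a, ¬ G.Adj z u → Ms G c' z a = Ms G c z a := by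
    intro z a hnadj
    unfold Ms
    apply Finset.filter_congr
    intro w _
    by_cases hwu : w = u
    · subst hwu; simp [hnadj]
    · simp [hc'w w hwu]
  have hMeq_other : ∀ z a, a ≠ α → a ≠ b → Ms G c' z a = Ms G c z a := by
    intro z a haα hab
    unfold Ms
    apply Finset.filter_congr
    intro w _
    by_cases hwu : w = u
    · subst hwu
      simp only [hc'u]
      constructor
      · rintro ⟨h1, h2⟩
        exact absurd h2.symm hab
      · rintro ⟨h1, h2⟩
        exact absurd h2.symm haα
    · simp [hc'w w hwu]
  have hMα : ∀ z, G.Adj z u → Ms G c' z α = (Ms G c z α).erase u := by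
    intro z hadj
    ext w
    simp only [Ms, Finset.mem_filter, Finset.mem_univ, true_and, Finset.mem_erase]
    constructor
    · rintro ⟨h1, h2⟩
      have hwu : w ≠ u := by
        intro heq; subst heq
        rw [hc'u] at h2
        exact hbα h2
      rw [hc'w w hwu] at h2
      exact ⟨hwu, h1, h2⟩
    · rintro ⟨hwu, h1, h2⟩
      rw [← hc'w w hwu] at h2
      exact ⟨h1, h2⟩
  have huMα : ∀ z, G.Adj z u → u ∈ Ms G c z α := by
    intro z hadj
    simp [Ms, hadj, hα_def]
  have hMb : ∀ z, G.Adj z u → Ms G c' z b = insert u (Ms G c z b) := by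
    intro z hadj
    ext w
    simp only [Ms, Finset.mem_filter, Finset.mem_univ, true_and, Finset.mem_insert]
    constructor
    · rintro ⟨h1, h2⟩
      by_cases hwu : w = u
      · left; exact hwu
      · right
        rw [hc'w w hwu] at h2
        exact ⟨h1, h2⟩
    · rintro (rfl | ⟨h1, h2⟩)
      · exact ⟨hadj, hc'u⟩
      · have hwu : w ≠ u := by
          intro heq; subst heq
          exact hbα h2.symm
        rw [hc'w w hwu]
        exact ⟨h1, h2⟩
  have huMb : ∀ z, u ∉ Ms G c z b := by
    intro z
    simp only [Ms, Finset.mem_filter, Finset.mem_univ, true_and, not_and]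
    intro _
    exact fun h => hbα h.symm
  -- now prove IsOddCol
  refine ⟨c', ⟨⟨?_, ?_⟩, ?_⟩⟩
  · intro w
    by_cases hwu : w = u
    · subst hwu; rw [hc'u]; exact hbm
    · rw [hc'w w hwu]; exact hlt w
  · intro x y hxy
    by_cases hxu : x = u
    · have hyu : y ≠ u := by
        rw [← hxu]
        exact (G.ne_of_adj hxy).symm
      rw [hxu, hc'u, hc'w y hyu]
      apply hbnbr y
      rw [← hxu]
      exact hxy
    · by_cases hyu : y = u
      · rw [hyu, hc'u, hc'w x hxu]
        intro h
        apply hbnbr x ?_ h.symm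
        rw [← hyu]
        exact hxy.symm
      · rw [hc'w x hxu, hc'w y hyu]
        exact hprop x y hxy
  · intro z hz
    by_cases hzv : z = v
    · have hzu' : G.Adj z u := by rw [hzv]; exact hu
      refine ⟨α, ?_⟩
      rw [colMult_eq_Ms, hMα z hzu', Finset.card_erase_of_mem (huMα z hzu')]
      have h1 : ¬ Odd ((Ms G c z α).card) := by
        have h0 := hveven α
        rw [colMult_eq_Ms] at h0
        rwa [← hzv] at h0
      have h2 : 1 ≤ (Ms G c z α).card := Finset.card_pos.mpr ⟨u, huMα z hzu'⟩
      rw [Nat.odd_iff] at *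
      omega
    · by_cases hzu : G.Adj z u
      · -- z adjacent to u, z ≠ v
        by_cases hα_odd : Odd (colMult G c z α)
        · by_cases hb_odd : Odd (colMult G c z b)
          · by_cases hex : ∃ a, Odd (colMult G c z a) ∧ a ≠ α ∧ a ≠ b
            · obtain ⟨a, ha, h1, h2⟩ := hex
              refine ⟨a, ?_⟩
              rw [colMult_eq_Ms, hMeq_other z a h1 h2, ← colMult_eq_Ms]
              exact ha
            · exfalso
              apply hbTT z hzu.symm
              push_neg at hex
              ext a
              rw [hOc_def]
              simp only [Finset.mem_filter, Finset.mem_range, Finset.mem_insert,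
                Finset.mem_singleton]
              constructor
              · rintro ⟨_, hodd⟩
                by_cases haα : a = α
                · exact Or.inl haα
                · exact Or.inr (hex a hodd haα)
              · rintro (rfl | rfl)
                · exact ⟨hlt u, hα_odd⟩
                · exact ⟨hbm, hb_odd⟩
          · refine ⟨b, ?_⟩
            rw [colMult_eq_Ms, hMb z hzu, Finset.card_insert_of_notMem (huMb z), ← colMult_eq_Ms]
            rw [Nat.odd_iff] at *
            have := hb_odd
            omega
        · refine ⟨α, ?_⟩
          rw [colMult_eq_Ms, hMα z hzu, Finset.card_erase_of_mem (huMα z hzu)]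
          have h2 : 1 ≤ (Ms G c z α).card := Finset.card_pos.mpr ⟨u, huMα z hzu⟩
          rw [colMult_eq_Ms] at hα_odd
          rw [Nat.odd_iff] at *
          omega
      · -- z not adjacent to u
        obtain ⟨a, ha⟩ := hhappy z hzv hz
        refine ⟨a, ?_⟩
        rw [colMult_eq_Ms, hMeq_nadj z a hzu, ← colMult_eq_Ms]
        exact ha

end Recolor

end Aux


/-- extending an odd coloring of `G − K` across a clique `K`. -/
theorem stmt_10 {V : Type*} [Fintype V] (G : SimpleGraph V) (K : Finset V)
    (hK : G.IsClique (K : Set V)) (m : ℕ)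
    (hm : (2 * maxDeg G : ℤ) - K.card + 3 ≤ (m : ℤ))
    (hcol : ∃ c, IsOddCol (G.induce ((K : Set V)ᶜ)) m c) :
    ∃ c, IsOddCol G m c := by
  classical
  obtain ⟨c₀, hc₀⟩ := hcol
  have hm' : 2 * maxDeg G + 3 ≤ m + K.card := by omega
  by_cases hK0 : K.card = 0
  · -- K is empty : transfer the coloring
    have hno : ∀ w, w ∉ K := by
      intro w hw
      have := Finset.card_pos.mpr ⟨w, hw⟩
      omega
    refine ⟨cVd K c₀, ⟨⟨?_, ?_⟩, ?_⟩⟩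
    · intro v
      rw [cVd_eq K c₀ (hno v)]
      exact hc₀.1.1 _
    · intro x y hxy
      rw [cVd_eq K c₀ (hno x), cVd_eq K c₀ (hno y)]
      exact hc₀.1.2 ⟨x, by simp [hno x]⟩ ⟨y, by simp [hno y]⟩ (by simpa using hxy)
    · rintro v ⟨u, hadj⟩
      obtain ⟨a, ha⟩ := hc₀.2 ⟨v, by simp [hno v]⟩
        ((transfer_adj G K v (hno v)).mpr ⟨u, hadj, hno u⟩)
      refine ⟨a, ?_⟩
      rw [transfer_colMult G K c₀ v (hno v) a] at ha
      rw [colMult_split G K (cVd K c₀) v a]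
      have hMK0 : MKs G K (cVd K c₀) v a = ∅ := by
        rw [Finset.eq_empty_iff_forall_notMem]
        intro w hw
        simp only [MKs, Finset.mem_filter, Finset.mem_univ, true_and] at hw
        exact hno w hw.2.1
      rw [hMK0]
      simpa using ha
  · -- K is nonempty
    have hk1 : 1 ≤ K.card := by omega
    have hKne : K.Nonempty := Finset.card_pos.mp (by omega)
    obtain ⟨v₀, hv₀⟩ := hKne
    set e := K.equivFin with he
    set vt : ℕ → V := fun i => if h : i < K.card then ((e.symm ⟨i, h⟩ : ↥K) : V) else v₀
      with hvt_def
    have hvt_mem : ∀ i, i < K.card → vt i ∈ K := by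
      intro i hi
      rw [hvt_def]
      simp only [hi, dif_pos]
      exact (e.symm ⟨i, hi⟩).2
    have hvt_inj : ∀ i j, i < K.card → j < K.card → vt i = vt j → i = j := by
      intro i j hi hj hij
      rw [hvt_def] at hij
      simp only [hi, hj, dif_pos] at hij
      have h2 : e.symm ⟨i, hi⟩ = e.symm ⟨j, hj⟩ := Subtype.ext hij
      have h3 := e.symm.injective h2
      exact congrArg Fin.val h3
    have hvt_surj : ∀ w, w ∈ K → ∃ i, i < K.card ∧ vt i = w := by
      intro w hw
      refine ⟨(e ⟨w, hw⟩).val, (e ⟨w, hw⟩).isLt, ?_⟩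
      rw [hvt_def]
      simp only [(e ⟨w, hw⟩).isLt, dif_pos]
      have : (⟨(e ⟨w, hw⟩).val, (e ⟨w, hw⟩).isLt⟩ : Fin K.card) = e ⟨w, hw⟩ := by
        apply Fin.ext
        rfl
      rw [this, Equiv.symm_apply_apply]
    set f := ffs m (fun i => Fbs G K c₀ (vt i)) (fun j => OddWs G K c₀ m (vt j)) K.card
      with hf_def
    -- availability of colors at each greedy step
    have havail : ∀ i, i < K.card →
        ((Finset.range m) \ Forbs (fun i => Fbs G K c₀ (vt i))
          (fun j => OddWs G K c₀ m (vt j)) K.card f i).Nonempty := by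
      intro i hi
      have hsub : nbrWWs G K (vt i) ⊆ nbrWs G K (vt i) := by
        intro w hw
        simp only [nbrWWs, Finset.mem_filter, Finset.mem_univ, true_and] at hw
        simp only [nbrWs, Finset.mem_filter, Finset.mem_univ, true_and]
        exact ⟨hw.1, hw.2.1⟩
      have hFbcard : (Fbs G K c₀ (vt i)).card ≤ 2 * (nbrWs G K (vt i)).card := by
        rw [Fbs]
        have h1 := Finset.card_union_le ((nbrWs G K (vt i)).image (cVd K c₀))
          ((nbrWWs G K (vt i)).image (aas G K c₀))
        have h2 : ((nbrWs G K (vt i)).image (cVd K c₀)).card ≤ (nbrWs G K (vt i)).card :=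
          Finset.card_image_le
        have h3 : ((nbrWWs G K (vt i)).image (aas G K c₀)).card ≤ (nbrWWs G K (vt i)).card :=
          Finset.card_image_le
        have h4 := Finset.card_le_card hsub
        omega
      have hsplit_deg : (nbrWs G K (vt i)).card + (K.card - 1) = deg G (vt i) := by
        rw [deg_eq_nbrF]
        have hdisj : Disjoint (nbrWs G K (vt i)) (K.erase (vt i)) := by
          rw [Finset.disjoint_left]
          intro w hw hw'
          simp only [nbrWs, Finset.mem_filter] at hw
          exact hw.2.2 (Finset.mem_of_mem_erase hw')
        have hunion : nbrF G (vt i) = nbrWs G K (vt i) ∪ K.erase (vt i) := by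
          ext w
          simp only [nbrF, nbrWs, Finset.mem_filter, Finset.mem_univ, true_and,
            Finset.mem_union, Finset.mem_erase]
          constructor
          · intro hadj
            by_cases hwK : w ∈ K
            · exact Or.inr ⟨(G.ne_of_adj hadj).symm, hwK⟩
            · exact Or.inl ⟨hadj, hwK⟩
          · rintro (⟨hadj, _⟩ | ⟨hne, hwK⟩)
            · exact hadj
            · exact clique_adj G K hK (hvt_mem i hi) hwK (Ne.symm hne)
        rw [hunion, Finset.card_union_of_disjoint hdisj,
          Finset.card_erase_of_mem (hvt_mem i hi)]
      have hdegmax := deg_le_maxDeg G (vt i)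
      have hused : (Useds f i).card ≤ i := by
        rw [Useds]
        have := Finset.card_image_le (s := Finset.range i) (f := f)
        rw [Finset.card_range] at this
        exact this
      have hgrd : (Grds (fun j => OddWs G K c₀ m (vt j)) K.card f i).card ≤ bnd K.card i := by
        rw [Grds]
        split_ifs with h
        · exact h
        · simp
      have hbnd : i + bnd K.card i ≤ K.card := by
        rw [bnd]
        split_ifs with h
        · omega
        · omega
      have hforb : (Forbs (fun i => Fbs G K c₀ (vt i)) (fun j => OddWs G K c₀ m (vt j))
          K.card f i).card ≤ (Fbs G K c₀ (vt i)).card + (Useds f i).card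
            + (Grds (fun j => OddWs G K c₀ m (vt j)) K.card f i).card := by
        simp only [Forbs]
        have h1 := Finset.card_union_le (Fbs G K c₀ (vt i) ∪ Useds f i)
          (Grds (fun j => OddWs G K c₀ m (vt j)) K.card f i)
        have h2 := Finset.card_union_le (Fbs G K c₀ (vt i)) (Useds f i)
        omega
      by_contra hne
      rw [Finset.not_nonempty_iff_eq_empty, Finset.sdiff_eq_empty_iff_subset] at hne
      have hcard := Finset.card_le_card hne
      rw [Finset.card_range] at hcard
      omega
    have hspec : ∀ i, i < K.card → f i ∈ (Finset.range m) \ Forbs (fun i => Fbs G K c₀ (vt i))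
        (fun j => OddWs G K c₀ m (vt j)) K.card f i := by
      intro i hi
      exact ffs_spec m _ _ K.card i (havail i hi)
    have hf_lt : ∀ i, i < K.card → f i < m := by
      intro i hi
      have := hspec i hi
      rw [Finset.mem_sdiff, Finset.mem_range] at this
      exact this.1
    have hf_notforb : ∀ i, i < K.card → f i ∉ Fbs G K c₀ (vt i) ∧ f i ∉ Useds f i ∧
        f i ∉ Grds (fun j => OddWs G K c₀ m (vt j)) K.card f i := by
      intro i hi
      have := hspec i hi
      rw [Finset.mem_sdiff] at this
      have h2 := this.2
      simp only [Forbs, Finset.mem_union, not_or] at h2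
      exact ⟨h2.1.1, h2.1.2, h2.2⟩
    have hf_Fb : ∀ i, i < K.card → f i ∉ Fbs G K c₀ (vt i) := fun i hi => (hf_notforb i hi).1
    have hf_used : ∀ i, i < K.card → f i ∉ Useds f i := fun i hi => (hf_notforb i hi).2.1
    have hf_grd : ∀ i, i < K.card →
        f i ∉ Grds (fun j => OddWs G K c₀ m (vt j)) K.card f i :=
      fun i hi => (hf_notforb i hi).2.2
    have hf_inj : ∀ i j, i < K.card → j < K.card → i ≠ j → f i ≠ f j := by
      intro i j hi hj hne heq
      rcases Nat.lt_or_ge i j with h | h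
      · exact hf_used j hj (Finset.mem_image.mpr ⟨i, Finset.mem_range.mpr h, heq⟩)
      · have h' : j < i := by omega
        exact hf_used i hi (Finset.mem_image.mpr ⟨j, Finset.mem_range.mpr h', heq.symm⟩)
    -- the extended coloring
    set c : V → ℕ := fun w => if h : w ∈ K then f ((e ⟨w, h⟩ : Fin K.card).val) else cVd K c₀ w
      with hc_def
    have hcW : ∀ w, w ∉ K → c w = cVd K c₀ w := by
      intro w hw
      rw [hc_def]
      simp only [hw, dif_neg, not_false_iff]
    have hcK : ∀ i, i < K.card → c (vt i) = f i := by
      intro i hi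
      have hmem := hvt_mem i hi
      rw [hc_def]
      simp only [hmem, dif_pos]
      congr 1
      have h1 : (⟨vt i, hmem⟩ : ↥K) = e.symm ⟨i, hi⟩ := by
        apply Subtype.ext
        show vt i = ↑(e.symm ⟨i, hi⟩)
        rw [hvt_def]
        simp only [hi, dif_pos]
      rw [h1, Equiv.apply_symm_apply]
    have hc_lt := ext_lt G K c₀ m vt f c hc₀ hcW hcK hvt_surj hf_lt
    have hc_proper := ext_proper G K c₀ m vt f c hK hc₀ hcW hcK hvt_surj hf_inj hf_Fb
    have hc_Wodd := ext_W_odd G K c₀ m vt f c hK hc₀ hcW hcK hvt_surj hf_inj hf_Fb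
    by_cases hk2 : 2 ≤ K.card
    · -- at least two vertices in the clique: no recoloring needed
      refine ⟨c, ⟨⟨hc_lt, hc_proper⟩, ?_⟩⟩
      intro z hz
      by_cases hzK : z ∈ K
      · obtain ⟨l, hl, rfl⟩ := hvt_surj z hzK
        by_contra hnone
        push_neg at hnone
        exact kill_lemma G K c₀ m vt f hk2 hf_inj hf_used hf_grd l hl
          (unhappy_eq G K c₀ m vt f c hK hcW hcK hvt_mem hvt_inj hvt_surj hf_lt hf_inj
            l hl hnone)
      · exact hc_Wodd z hzK hz
    · -- K.card = 1
      have hk1' : K.card = 1 := by omega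
      by_cases hveven : ∀ a, ¬ Odd (colMult G c (vt 0) a)
      · by_cases hadj : ∃ w, G.Adj (vt 0) w
        · obtain ⟨u, hu⟩ := hadj
          refine recolor_fix G m c (vt 0) u hc_lt hc_proper ?_ hveven hu ?_
          · intro z hzv hzadj
            by_cases hzK : z ∈ K
            · obtain ⟨l, hl, rfl⟩ := hvt_surj z hzK
              have hl0 : l = 0 := by omega
              exact absurd (by rw [hl0]) hzv
            · exact hc_Wodd z hzK hzadj
          · have := deg_le_maxDeg G u
            omega
        · refine ⟨c, ⟨⟨hc_lt, hc_proper⟩, ?_⟩⟩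
          intro z hz
          by_cases hzK : z ∈ K
          · obtain ⟨l, hl, rfl⟩ := hvt_surj z hzK
            have hl0 : l = 0 := by omega
            rw [hl0] at hz
            exact absurd hz hadj
          · exact hc_Wodd z hzK hz
      · push_neg at hveven
        obtain ⟨a₀, ha₀⟩ := hveven
        refine ⟨c, ⟨⟨hc_lt, hc_proper⟩, ?_⟩⟩
        intro z hz
        by_cases hzK : z ∈ K
        · obtain ⟨l, hl, rfl⟩ := hvt_surj z hzK
          have hl0 : l = 0 := by omega
          rw [hl0]
          exact ⟨a₀, ha₀⟩
        · exact hc_Wodd z hzK hz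
end

section
/- Let G be a graph with Δ(G) ≥ 3, let v₁v₂ be an edge of G, and set K = N_G[v₁] ∩ N_G[v₂]. If m is an integer with m ≥ 2Δ(G) − |K| + ⌈3/2 + √(2|K|−3)⌉ and G − {v₁, v₂} has an odd m-coloring, then G has an odd m-coloring. -/
open SimpleGraph

variable {V : Type*}

/-- Closed neighborhood. -/
def closedNbr {V : Type*} (G : SimpleGraph V) (v : V) : Set V :=
  insert v (G.neighborSet v)

section Aux

lemma badOne_subsingleton (f : ℕ → ℕ) :
    {b : ℕ | ∀ x, ¬ Odd (f x + (if x = b then 1 else 0))}.Subsingleton := by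
  intro a ha b hb
  by_contra hne
  have h1 := ha b
  have h2 := hb b
  rw [if_neg (fun h => hne h.symm)] at h1
  rw [if_pos rfl] at h2
  simp only [Nat.not_odd_iff_even, Nat.add_zero] at h1 h2
  rw [Nat.even_add_one] at h2
  exact h2 h1

lemma badPair_facts (f : ℕ → ℕ) (a b : ℕ) (hab : a ≠ b)
    (h : ∀ x, ¬ Odd (f x + (if x = a then 1 else 0) + (if x = b then 1 else 0))) :
    Odd (f a) ∧ Odd (f b) ∧ ∀ x, x ≠ a → x ≠ b → Even (f x) := by
  have ha := h a
  have hb := h b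
  rw [if_pos rfl, if_neg hab] at ha
  rw [if_neg (fun h' => hab h'.symm), if_pos rfl] at hb
  simp only [Nat.not_odd_iff_even, Nat.add_zero] at ha hb
  rw [Nat.even_add_one, Nat.not_even_iff_odd] at ha hb
  refine ⟨ha, hb, fun x hxa hxb => ?_⟩
  have hx := h x
  rw [if_neg hxa, if_neg hxb] at hx
  simpa only [Nat.not_odd_iff_even, Nat.add_zero] using hx

/-- A bad pair is determined up to swap. -/
lemma badPair_eq (f : ℕ → ℕ) (a b a' b' : ℕ) (hab : a ≠ b) (hab' : a' ≠ b')
    (h : ∀ x, ¬ Odd (f x + (if x = a then 1 else 0) + (if x = b then 1 else 0)))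
    (h' : ∀ x, ¬ Odd (f x + (if x = a' then 1 else 0) + (if x = b' then 1 else 0))) :
    (a' = a ∧ b' = b) ∨ (a' = b ∧ b' = a) := by
  obtain ⟨ha, hb, hev⟩ := badPair_facts f a b hab h
  obtain ⟨ha', hb', hev'⟩ := badPair_facts f a' b' hab' h'
  have hma : a' = a ∨ a' = b := by
    by_contra hc
    push_neg at hc
    exact (Nat.not_odd_iff_even.mpr (hev a' hc.1 hc.2)) ha'
  have hmb : b' = a ∨ b' = b := by
    by_contra hc
    push_neg at hc
    exact (Nat.not_odd_iff_even.mpr (hev b' hc.1 hc.2)) hb'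
  rcases hma with h1 | h1 <;> rcases hmb with h2 | h2
  · exact absurd (h1.trans h2.symm) hab'
  · exact Or.inl ⟨h1, h2⟩
  · exact Or.inr ⟨h1, h2⟩
  · exact absurd (h1.trans h2.symm) hab'

lemma exists_good_pair (s₁ s₂ : Finset ℕ) (P : Finset (ℕ × ℕ))
    (h : s₁.card + P.card < s₁.card * s₂.card) :
    ∃ a ∈ s₁, ∃ b ∈ s₂, a ≠ b ∧ (a, b) ∉ P := by
  classical
  set T := (s₁ ×ˢ s₂).filter (fun p => p.1 = p.2 ∨ p ∈ P) with hT
  have hTsub : T ⊆ (s₁.image fun a => (a, a)) ∪ P := by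
    intro p hp
    simp only [hT, Finset.mem_filter, Finset.mem_product] at hp
    obtain ⟨⟨hp1, hp2⟩, hc | hc⟩ := hp
    · refine Finset.mem_union_left _ ?_
      refine Finset.mem_image.mpr ⟨p.1, hp1, ?_⟩
      ext <;> simp [hc]
    · exact Finset.mem_union_right _ hc
  have hTcard : T.card ≤ s₁.card + P.card := by
    calc T.card ≤ ((s₁.image fun a => (a, a)) ∪ P).card := Finset.card_le_card hTsub
    _ ≤ (s₁.image fun a => (a, a)).card + P.card := Finset.card_union_le _ _
    _ ≤ s₁.card + P.card := by gcongr; exact Finset.card_image_le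
  have hsplit := Finset.card_filter_add_card_filter_not
    (s := s₁ ×ˢ s₂) (p := fun p => p.1 = p.2 ∨ p ∈ P)
  rw [Finset.card_product, ← hT] at hsplit
  have hne : ((s₁ ×ˢ s₂).filter (fun p => ¬(p.1 = p.2 ∨ p ∈ P))).Nonempty := by
    rw [← Finset.card_pos]
    omega
  obtain ⟨p, hp⟩ := hne
  simp only [Finset.mem_filter, Finset.mem_product, not_or] at hp
  exact ⟨p.1, hp.1.1, p.2, hp.1.2, hp.2.1, by simpa using hp.2.2⟩

lemma ceil_facts (k : ℕ) (C : ℤ) (hC : (3/2 : ℝ) + Real.sqrt (2*(k:ℝ)+1) ≤ (C:ℝ)) :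
    3 ≤ C.toNat ∧ 2*k+1 ≤ (C.toNat - 1) * (C.toNat - 2) := by
  have h0 : (0:ℝ) ≤ 2*(k:ℝ)+1 := by positivity
  have hs1 : (1:ℝ) ≤ Real.sqrt (2*(k:ℝ)+1) := by
    rw [show (1:ℝ) = Real.sqrt 1 by simp]
    exact Real.sqrt_le_sqrt (by norm_num)
  have hs2 : Real.sqrt (2*(k:ℝ)+1) ^ 2 = 2*(k:ℝ)+1 := Real.sq_sqrt h0
  have hC3 : (3:ℤ) ≤ C := by
    have : (2:ℝ) < (C:ℝ) := by linarith
    have h2 : (2:ℤ) < C := by exact_mod_cast this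
    omega
  have hn3 : 3 ≤ C.toNat := by omega
  refine ⟨hn3, ?_⟩
  set n := C.toNat with hn
  have hcast : ((n:ℝ)) = (C:ℝ) := by
    have : (n : ℤ) = C := by omega
    exact_mod_cast congrArg (fun x : ℤ => (x:ℝ)) this
  have key : (2*(k:ℝ)) < ((n-1) * (n-2) : ℕ) := by
    have hcast2 : (((n-1) * (n-2) : ℕ) : ℝ) = ((n:ℝ) - 1) * ((n:ℝ) - 2) := by
      push_cast [Nat.cast_sub (by omega : 1 ≤ n), Nat.cast_sub (by omega : 2 ≤ n)]
      ring
    rw [hcast2]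
    nlinarith [hs1, hs2, hC, hcast]
  have : 2*k < (n-1)*(n-2) := by exact_mod_cast key
  omega
end Aux

theorem stmt_11 {V : Type*} [Fintype V] (G : SimpleGraph V)
    (hD : 3 ≤ maxDeg G) (v₁ v₂ : V) (hadj : G.Adj v₁ v₂) (m : ℕ)
    (hm : (2 * (maxDeg G : ℝ)) - ((closedNbr G v₁ ∩ closedNbr G v₂).ncard : ℝ) +
      (⌈(3 / 2 : ℝ) + Real.sqrt (2 * ((closedNbr G v₁ ∩ closedNbr G v₂).ncard : ℝ) - 3)⌉ : ℝ)
      ≤ (m : ℝ))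
    (hcol : ∃ c, IsOddCol (G.induce ({v₁, v₂} : Set V)ᶜ) m c) :
    ∃ c, IsOddCol G m c := by
  classical
  obtain ⟨c', hc'⟩ := hcol
  have hne12 : v₁ ≠ v₂ := G.ne_of_adj hadj
  set Kc : Set V := {w | G.Adj v₁ w ∧ G.Adj v₂ w} with hKcdef
  set k := Kc.ncard with hkdef
  have hv1Kc : v₁ ∉ Kc := fun h => G.loopless.irrefl v₁ h.1
  have hv2Kc : v₂ ∉ Kc := fun h => G.loopless.irrefl v₂ h.2
  have hKeq : closedNbr G v₁ ∩ closedNbr G v₂ = insert v₁ (insert v₂ Kc) := by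
    ext w
    simp only [closedNbr, Set.mem_inter_iff, Set.mem_insert_iff, mem_neighborSet, hKcdef,
      Set.mem_setOf_eq]
    constructor
    · rintro ⟨h1 | h1, h2 | h2⟩ <;> tauto
    · rintro (rfl | rfl | ⟨h1, h2⟩)
      · exact ⟨Or.inl rfl, Or.inr hadj.symm⟩
      · exact ⟨Or.inr hadj, Or.inl rfl⟩
      · exact ⟨Or.inr h1, Or.inr h2⟩
  have hKcard : (closedNbr G v₁ ∩ closedNbr G v₂).ncard = k + 2 := by
    rw [hKeq, Set.ncard_insert_of_notMem (by simp [hne12, hv1Kc]),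
      Set.ncard_insert_of_notMem hv2Kc]
  have hdegle : ∀ v, deg G v ≤ maxDeg G := fun v =>
    le_csSup (Set.Finite.bddAbove (Set.finite_range _)) ⟨v, rfl⟩
  -- the ceiling constant
  set C : ℤ := ⌈(3 / 2 : ℝ) + Real.sqrt (2 * ((closedNbr G v₁ ∩ closedNbr G v₂).ncard : ℝ) - 3)⌉
    with hCdef
  have hCineq : (3/2 : ℝ) + Real.sqrt (2*(k:ℝ)+1) ≤ (C:ℝ) := by
    have h := Int.le_ceil ((3 / 2 : ℝ) +
      Real.sqrt (2 * ((closedNbr G v₁ ∩ closedNbr G v₂).ncard : ℝ) - 3))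
    rw [← hCdef, hKcard] at h
    have harg : (2 * ((k + 2 : ℕ) : ℝ) - 3) = 2*(k:ℝ)+1 := by push_cast; ring
    rw [harg] at h
    exact h
  obtain ⟨hC3, hCkey⟩ := ceil_facts k C hCineq
  set Cn := C.toNat with hCndef
  have hmn : 2 * maxDeg G + Cn ≤ m + k + 2 := by
    rw [hKcard] at hm
    have hCn : ((Cn : ℕ) : ℝ) = (C : ℝ) := by
      have : (Cn : ℤ) = C := by omega
      exact_mod_cast congrArg (fun x : ℤ => (x : ℝ)) this
    have : (2 * (maxDeg G : ℝ)) + (Cn : ℝ) ≤ (m : ℝ) + (k : ℝ) + 2 := by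
      rw [hCn]; push_cast at hm ⊢; linarith
    exact_mod_cast this
  -- base coloring on V
  set c₀ : V → ℕ := fun u => if h : u ∈ ({v₁, v₂} : Set V)ᶜ then c' ⟨u, h⟩ else 0 with hc₀def
  have hmemcompl : ∀ w : V, w ≠ v₁ → w ≠ v₂ → w ∈ ({v₁, v₂} : Set V)ᶜ := by
    intro w h1 h2; simp [h1, h2]
  have hc₀eq : ∀ (w : V) (h : w ∈ ({v₁, v₂} : Set V)ᶜ), c₀ w = c' ⟨w, h⟩ := by
    intro w h; simp only [hc₀def]; rw [dif_pos h]
  have hc₀lt : ∀ w : V, w ≠ v₁ → w ≠ v₂ → c₀ w < m := by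
    intro w h1 h2
    rw [hc₀eq w (hmemcompl w h1 h2)]
    exact hc'.1.1 _
  -- old counts
  set ocnt : V → ℕ → ℕ :=
    fun v a => {w | G.Adj v w ∧ w ≠ v₁ ∧ w ≠ v₂ ∧ c₀ w = a}.ncard with hocntdef
  have hcolMult : ∀ (w : V) (hw : w ∈ ({v₁, v₂} : Set V)ᶜ) (a : ℕ),
      colMult (G.induce ({v₁, v₂} : Set V)ᶜ) c' ⟨w, hw⟩ a = ocnt w a := by
    intro w hw a
    rw [colMult, hocntdef]
    rw [← Set.ncard_image_of_injective _ Subtype.val_injective]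
    congr 1
    ext x
    constructor
    · rintro ⟨⟨u, hu⟩, ⟨hadjuw, hcu⟩, rfl⟩
      simp only [comap_adj, Function.Embedding.coe_subtype] at hadjuw
      have hu1 : u ≠ v₁ := by intro h; subst h; simp at hu
      have hu2 : u ≠ v₂ := by intro h; subst h; simp at hu
      exact ⟨hadjuw, hu1, hu2, by rw [hc₀eq u hu]; exact hcu⟩
    · rintro ⟨hadjwx, hx1, hx2, hcx⟩
      refine ⟨⟨x, hmemcompl x hx1 hx2⟩, ⟨?_, ?_⟩, rfl⟩
      · simpa only [comap_adj, Function.Embedding.coe_subtype] using hadjwx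
      · rw [← hc₀eq x (hmemcompl x hx1 hx2)]; exact hcx
  -- bad sets
  set BadOne : V → Set ℕ :=
    fun u => {b : ℕ | ∀ x, ¬ Odd (ocnt u x + (if x = b then 1 else 0))} with hBadOnedef
  set BadPair : V → Set (ℕ × ℕ) :=
    fun u => {p : ℕ × ℕ | p.1 ≠ p.2 ∧
      ∀ x, ¬ Odd (ocnt u x + (if x = p.1 then 1 else 0) + (if x = p.2 then 1 else 0))}
    with hBadPairdef
  have hBadOne_ss : ∀ u, (BadOne u).Subsingleton := fun u => badOne_subsingleton (ocnt u)
  have hBadOne_le : ∀ u, (BadOne u).ncard ≤ 1 := by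
    intro u
    rcases (hBadOne_ss u).eq_empty_or_singleton with h | ⟨x, h⟩ <;> simp [h]
  -- neighbor index sets
  set S1 : Set V := {w | G.Adj v₁ w ∧ w ≠ v₂} with hS1def
  set S2 : Set V := {w | G.Adj v₂ w ∧ w ≠ v₁} with hS2def
  set I1 : Set V := {w | G.Adj v₁ w ∧ w ≠ v₂ ∧ w ∉ Kc} with hI1def
  set I2 : Set V := {w | G.Adj v₂ w ∧ w ≠ v₁ ∧ w ∉ Kc} with hI2def
  have hS1card : S1.ncard + 1 = deg G v₁ := by
    have : S1 = G.neighborSet v₁ \ {v₂} := by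
      ext w; simp [hS1def, mem_neighborSet, Set.mem_diff, and_comm]
    rw [this, deg]
    exact Set.ncard_diff_singleton_add_one hadj (Set.toFinite _)
  have hS2card : S2.ncard + 1 = deg G v₂ := by
    have : S2 = G.neighborSet v₂ \ {v₁} := by
      ext w; simp [hS2def, mem_neighborSet, Set.mem_diff, and_comm]
    rw [this, deg]
    exact Set.ncard_diff_singleton_add_one hadj.symm (Set.toFinite _)
  have hI1card : I1.ncard + (k + 1) = deg G v₁ := by
    have h1 : I1 = G.neighborSet v₁ \ insert v₂ Kc := by
      ext w
      simp only [hI1def, Set.mem_setOf_eq, Set.mem_diff, mem_neighborSet, Set.mem_insert_iff,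
        not_or]
    have h2 : insert v₂ Kc ⊆ G.neighborSet v₁ := by
      rintro w (rfl | hw)
      · exact hadj
      · exact hw.1
    have h3 : (insert v₂ Kc).ncard = k + 1 := by
      rw [Set.ncard_insert_of_notMem hv2Kc]
    rw [h1, ← h3, deg]
    exact Set.ncard_diff_add_ncard_of_subset h2 (Set.toFinite _)
  have hI2card : I2.ncard + (k + 1) = deg G v₂ := by
    have h1 : I2 = G.neighborSet v₂ \ insert v₁ Kc := by
      ext w
      simp only [hI2def, Set.mem_setOf_eq, Set.mem_diff, mem_neighborSet, Set.mem_insert_iff,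
        not_or]
    have h2 : insert v₁ Kc ⊆ G.neighborSet v₂ := by
      rintro w (rfl | hw)
      · exact hadj.symm
      · exact hw.2
    have h3 : (insert v₁ Kc).ncard = k + 1 := by
      rw [Set.ncard_insert_of_notMem hv1Kc]
    rw [h1, ← h3, deg]
    exact Set.ncard_diff_add_ncard_of_subset h2 (Set.toFinite _)
  -- forbidden sets
  set F₁ : Set ℕ := (c₀ '' S1 ∪ ⋃ u ∈ I1, BadOne u) ∪ BadOne v₂ with hF₁def
  set F₂ : Set ℕ := (c₀ '' S2 ∪ ⋃ u ∈ I2, BadOne u) ∪ BadOne v₁ with hF₂def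
  set P : Set (ℕ × ℕ) := ⋃ u ∈ Kc, BadPair u with hPdef
  have hUnion_le : ∀ (I : Set V), (⋃ u ∈ I, BadOne u).ncard ≤ I.ncard := by
    intro I
    set pick : V → ℕ := fun u => if h : (BadOne u).Nonempty then h.choose else 0 with hpick
    have hsub : (⋃ u ∈ I, BadOne u) ⊆ pick '' I := by
      rintro x hx
      rw [Set.mem_iUnion₂] at hx
      obtain ⟨u, hu, hxu⟩ := hx
      refine ⟨u, hu, ?_⟩
      have hne : (BadOne u).Nonempty := ⟨x, hxu⟩
      have : pick u = hne.choose := by rw [hpick]; exact dif_pos hne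
      rw [this]
      exact hBadOne_ss u hne.choose_spec hxu
    calc (⋃ u ∈ I, BadOne u).ncard ≤ (pick '' I).ncard :=
          Set.ncard_le_ncard hsub (Set.toFinite _)
      _ ≤ I.ncard := Set.ncard_image_le (Set.toFinite _)
  have hF₁le : F₁.ncard + (k + 1) ≤ 2 * maxDeg G := by
    have h1 : F₁.ncard ≤ (c₀ '' S1).ncard + (⋃ u ∈ I1, BadOne u).ncard + (BadOne v₂).ncard :=
      le_trans (Set.ncard_union_le _ _) (by gcongr; exact Set.ncard_union_le _ _)
    have h2 : (c₀ '' S1).ncard ≤ S1.ncard := Set.ncard_image_le (Set.toFinite _)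
    have h3 := hUnion_le I1
    have h4 := hBadOne_le v₂
    have h5 := hdegle v₁
    omega
  have hF₂le : F₂.ncard + (k + 1) ≤ 2 * maxDeg G := by
    have h1 : F₂.ncard ≤ (c₀ '' S2).ncard + (⋃ u ∈ I2, BadOne u).ncard + (BadOne v₁).ncard :=
      le_trans (Set.ncard_union_le _ _) (by gcongr; exact Set.ncard_union_le _ _)
    have h2 : (c₀ '' S2).ncard ≤ S2.ncard := Set.ncard_image_le (Set.toFinite _)
    have h3 := hUnion_le I2
    have h4 := hBadOne_le v₁
    have h5 := hdegle v₂
    omega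
  have hPle : P.ncard ≤ 2 * k := by
    set pick2 : V → ℕ × ℕ :=
      fun u => if h : (BadPair u).Nonempty then h.choose else (0, 0) with hpick2
    have hsub : P ⊆ (pick2 '' Kc) ∪ ((Prod.swap ∘ pick2) '' Kc) := by
      rintro x hx
      simp only [hPdef, Set.mem_iUnion, exists_prop] at hx
      obtain ⟨u, hu, hxu⟩ := hx
      have hne : (BadPair u).Nonempty := ⟨x, hxu⟩
      have hpe : pick2 u = hne.choose := by rw [hpick2]; exact dif_pos hne
      have hspec := hne.choose_spec
      have := badPair_eq (ocnt u) hne.choose.1 hne.choose.2 x.1 x.2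
        hspec.1 hxu.1 hspec.2 hxu.2
      rcases this with ⟨h1, h2⟩ | ⟨h1, h2⟩
      · exact Set.mem_union_left _ ⟨u, hu, by rw [hpe]; exact Prod.ext h1.symm h2.symm⟩
      · refine Set.mem_union_right _ ⟨u, hu, ?_⟩
        rw [Function.comp_apply, hpe]
        exact Prod.ext h1.symm h2.symm
    calc P.ncard ≤ ((pick2 '' Kc) ∪ ((Prod.swap ∘ pick2) '' Kc)).ncard :=
          Set.ncard_le_ncard hsub (Set.toFinite _)
      _ ≤ (pick2 '' Kc).ncard + ((Prod.swap ∘ pick2) '' Kc).ncard := Set.ncard_union_le _ _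
      _ ≤ k + k := by
          gcongr <;> exact Set.ncard_image_le (Set.toFinite _)
      _ = 2 * k := by ring
  -- finiteness
  have hF₁fin : F₁.Finite := by
    rw [hF₁def]
    refine (((S1.toFinite.image c₀).union ?_).union (hBadOne_ss v₂).finite)
    exact Set.Finite.biUnion I1.toFinite (fun u _ => (hBadOne_ss u).finite)
  have hF₂fin : F₂.Finite := by
    rw [hF₂def]
    refine (((S2.toFinite.image c₀).union ?_).union (hBadOne_ss v₁).finite)
    exact Set.Finite.biUnion I2.toFinite (fun u _ => (hBadOne_ss u).finite)
  have hBadPair_fin : ∀ u, (BadPair u).Finite := by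
    intro u
    rcases Set.eq_empty_or_nonempty (BadPair u) with h | ⟨p, hp⟩
    · simp [h]
    · refine Set.Finite.subset ((Set.finite_singleton p.swap).insert p) ?_
      intro q hq
      rcases badPair_eq (ocnt u) p.1 p.2 q.1 q.2 hp.1 hq.1 hp.2 hq.2 with ⟨h1, h2⟩ | ⟨h1, h2⟩
      · exact Set.mem_insert_iff.mpr (Or.inl (Prod.ext h1 h2))
      · exact Set.mem_insert_iff.mpr (Or.inr (by
          simp only [Set.mem_singleton_iff]
          exact Prod.ext h1 h2))
  have hPfin : P.Finite := by
    rw [hPdef]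
    exact Set.Finite.biUnion Kc.toFinite (fun u _ => hBadPair_fin u)
  -- color candidate finsets
  set s₁ : Finset ℕ := (Finset.range m).filter (fun a => a ∉ F₁) with hs₁def
  set s₂ : Finset ℕ := (Finset.range m).filter (fun a => a ∉ F₂) with hs₂def
  have hs₁card : m ≤ s₁.card + F₁.ncard := by
    have hsplit := Finset.card_filter_add_card_filter_not
      (s := Finset.range m) (p := fun a => a ∈ F₁)
    rw [Finset.card_range] at hsplit
    have hsub : (Finset.range m).filter (fun a => a ∈ F₁) ⊆ hF₁fin.toFinset := by
      intro a ha
      simp only [Finset.mem_filter] at ha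
      exact hF₁fin.mem_toFinset.mpr ha.2
    have h1 := Finset.card_le_card hsub
    have h2 : F₁.ncard = hF₁fin.toFinset.card := Set.ncard_eq_toFinset_card _ hF₁fin
    have h3 : ((Finset.range m).filter (fun a => ¬ a ∈ F₁)).card = s₁.card := by rw [hs₁def]
    omega
  have hs₂card : m ≤ s₂.card + F₂.ncard := by
    have hsplit := Finset.card_filter_add_card_filter_not
      (s := Finset.range m) (p := fun a => a ∈ F₂)
    rw [Finset.card_range] at hsplit
    have hsub : (Finset.range m).filter (fun a => a ∈ F₂) ⊆ hF₂fin.toFinset := by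
      intro a ha
      simp only [Finset.mem_filter] at ha
      exact hF₂fin.mem_toFinset.mpr ha.2
    have h1 := Finset.card_le_card hsub
    have h2 : F₂.ncard = hF₂fin.toFinset.card := Set.ncard_eq_toFinset_card _ hF₂fin
    have h3 : ((Finset.range m).filter (fun a => ¬ a ∈ F₂)).card = s₂.card := by rw [hs₂def]
    omega
  have hs₁ge : Cn ≤ s₁.card + 1 := by omega
  have hs₂ge : Cn ≤ s₂.card + 1 := by omega
  set Pfin : Finset (ℕ × ℕ) := hPfin.toFinset with hPfindef
  have hPfincard : Pfin.card ≤ 2 * k := by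
    have h2 : P.ncard = Pfin.card := Set.ncard_eq_toFinset_card _ hPfin
    omega
  have hcount : s₁.card + Pfin.card < s₁.card * s₂.card := by
    have h1 : (Cn - 1) * (Cn - 2) ≤ s₁.card * (Cn - 2) :=
      Nat.mul_le_mul_right _ (by omega)
    have h2 : s₁.card * (Cn - 1) ≤ s₁.card * s₂.card :=
      Nat.mul_le_mul_left _ (by omega)
    have h3 : s₁.card * (Cn - 1) = s₁.card * (Cn - 2) + s₁.card := by
      rw [show Cn - 1 = (Cn - 2) + 1 by omega, Nat.mul_succ]
    omega
  obtain ⟨a₁, ha₁s, a₂, ha₂s, hnea, hPa⟩ := exists_good_pair s₁ s₂ Pfin hcount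
  rw [hs₁def, Finset.mem_filter, Finset.mem_range] at ha₁s
  rw [hs₂def, Finset.mem_filter, Finset.mem_range] at ha₂s
  obtain ⟨ha₁m, ha₁F⟩ := ha₁s
  obtain ⟨ha₂m, ha₂F⟩ := ha₂s
  have hPmem : (a₁, a₂) ∉ P := fun h => hPa (hPfin.mem_toFinset.mpr h)
  have ha₁F' : a₁ ∉ c₀ '' S1 ∧ (∀ u ∈ I1, a₁ ∉ BadOne u) ∧ a₁ ∉ BadOne v₂ := by
    rw [hF₁def] at ha₁F
    exact ⟨fun h => ha₁F (Set.mem_union_left _ (Set.mem_union_left _ h)),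
      fun u hu h => ha₁F (Set.mem_union_left _ (Set.mem_union_right _ (Set.mem_biUnion hu h))),
      fun h => ha₁F (Set.mem_union_right _ h)⟩
  have ha₂F' : a₂ ∉ c₀ '' S2 ∧ (∀ u ∈ I2, a₂ ∉ BadOne u) ∧ a₂ ∉ BadOne v₁ := by
    rw [hF₂def] at ha₂F
    exact ⟨fun h => ha₂F (Set.mem_union_left _ (Set.mem_union_left _ h)),
      fun u hu h => ha₂F (Set.mem_union_left _ (Set.mem_union_right _ (Set.mem_biUnion hu h))),
      fun h => ha₂F (Set.mem_union_right _ h)⟩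
  -- the extended coloring
  set c : V → ℕ := fun u => if u = v₁ then a₁ else if u = v₂ then a₂ else c₀ u with hcdef
  have hc1 : c v₁ = a₁ := by rw [hcdef]; simp
  have hc2 : c v₂ = a₂ := by rw [hcdef]; simp [hne12.symm]
  have hc0 : ∀ w, w ≠ v₁ → w ≠ v₂ → c w = c₀ w := by
    intro w h1 h2; rw [hcdef]; simp [h1, h2]
  -- decomposition of color counts
  have hdec : ∀ v a, colMult G c v a = ocnt v a
      + (if G.Adj v v₁ ∧ a = a₁ then 1 else 0)
      + (if G.Adj v v₂ ∧ a = a₂ then 1 else 0) := by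
    intro v a
    set B0 : Set V := {w | G.Adj v w ∧ w ≠ v₁ ∧ w ≠ v₂ ∧ c₀ w = a} with hB0def
    set B1 : Set V := {w | (G.Adj v v₁ ∧ a = a₁) ∧ w = v₁} with hB1def
    set B2 : Set V := {w | (G.Adj v v₂ ∧ a = a₂) ∧ w = v₂} with hB2def
    have hset : {u | G.Adj v u ∧ c u = a} = (B0 ∪ B1) ∪ B2 := by
      ext w
      simp only [hB0def, hB1def, hB2def, Set.mem_union, Set.mem_setOf_eq]
      constructor
      · rintro ⟨hvw, hcw⟩
        by_cases hw1 : w = v₁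
        · subst hw1
          exact Or.inl (Or.inr ⟨⟨hvw, by rw [← hcw, hc1]⟩, rfl⟩)
        by_cases hw2 : w = v₂
        · subst hw2
          exact Or.inr ⟨⟨hvw, by rw [← hcw, hc2]⟩, rfl⟩
        · exact Or.inl (Or.inl ⟨hvw, hw1, hw2, by rw [← hc0 w hw1 hw2]; exact hcw⟩)
      · rintro ((⟨h, h1, h2, h3⟩ | ⟨⟨h, h1⟩, rfl⟩) | ⟨⟨h, h1⟩, rfl⟩)
        · exact ⟨h, by rw [hc0 w h1 h2]; exact h3⟩
        · exact ⟨h, by rw [hc1, h1]⟩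
        · exact ⟨h, by rw [hc2, h1]⟩
    have hd1 : Disjoint B0 B1 :=
      Set.disjoint_left.mpr (fun w hw hw1 => hw.2.1 hw1.2)
    have hd2 : Disjoint (B0 ∪ B1) B2 := by
      refine Set.disjoint_left.mpr ?_
      rintro w (hw | hw) hw2
      · exact hw.2.2.1 hw2.2
      · exact hne12 (hw.2.symm.trans hw2.2)
    have hB1card : B1.ncard = if G.Adj v v₁ ∧ a = a₁ then 1 else 0 := by
      split_ifs with h
      · have : B1 = {v₁} := by ext w; simp [hB1def, h]
        rw [this, Set.ncard_singleton]
      · have : B1 = ∅ := by ext w; simp [hB1def, h]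
        rw [this, Set.ncard_empty]
    have hB2card : B2.ncard = if G.Adj v v₂ ∧ a = a₂ then 1 else 0 := by
      split_ifs with h
      · have : B2 = {v₂} := by ext w; simp [hB2def, h]
        rw [this, Set.ncard_singleton]
      · have : B2 = ∅ := by ext w; simp [hB2def, h]
        rw [this, Set.ncard_empty]
    have hB0card : B0.ncard = ocnt v a := by rw [hocntdef, hB0def]
    rw [colMult, hset, Set.ncard_union_eq hd2 (Set.toFinite _) (Set.toFinite _),
      Set.ncard_union_eq hd1 (Set.toFinite _) (Set.toFinite _),
      hB0card, hB1card, hB2card]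
  -- unfolding bad-set non-membership
  have hBadOne_mem : ∀ u b, b ∉ BadOne u →
      ∃ x, Odd (ocnt u x + (if x = b then 1 else 0)) := by
    intro u b hb
    rw [hBadOnedef] at hb
    simpa only [Set.mem_setOf_eq, not_forall, not_not] using hb
  have hBadPair_mem : ∀ u, (a₁, a₂) ∉ BadPair u →
      ∃ x, Odd (ocnt u x + (if x = a₁ then 1 else 0) + (if x = a₂ then 1 else 0)) := by
    intro u hb
    rw [hBadPairdef] at hb
    simp only [Set.mem_setOf_eq, not_and, not_forall, not_not] at hb
    exact hb hnea
  refine ⟨c, ⟨?_, ?_⟩, ?_⟩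
  · -- colors < m
    intro v
    by_cases h1 : v = v₁
    · subst h1; rw [hc1]; exact ha₁m
    by_cases h2 : v = v₂
    · subst h2; rw [hc2]; exact ha₂m
    · rw [hc0 v h1 h2]; exact hc₀lt v h1 h2
  · -- properness
    intro u w huw
    by_cases hu1 : u = v₁
    · rw [hu1] at huw ⊢
      by_cases hw2 : w = v₂
      · rw [hw2, hc1, hc2]; exact hnea
      have hw1 : w ≠ v₁ := fun h => G.loopless.irrefl v₁ (h ▸ huw)
      rw [hc1, hc0 w hw1 hw2]
      refine fun heq => ha₁F'.1 ⟨w, ?_, heq.symm⟩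
      rw [hS1def]; exact ⟨huw, hw2⟩
    by_cases hu2 : u = v₂
    · rw [hu2] at huw ⊢
      by_cases hw1 : w = v₁
      · rw [hw1, hc2, hc1]; exact hnea.symm
      have hw2 : w ≠ v₂ := fun h => G.loopless.irrefl v₂ (h ▸ huw)
      rw [hc2, hc0 w hw1 hw2]
      refine fun heq => ha₂F'.1 ⟨w, ?_, heq.symm⟩
      rw [hS2def]; exact ⟨huw, hw1⟩
    by_cases hw1 : w = v₁
    · rw [hw1] at huw ⊢
      rw [hc0 u hu1 hu2, hc1]
      refine fun heq => ha₁F'.1 ⟨u, ?_, heq⟩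
      rw [hS1def]; exact ⟨huw.symm, hu2⟩
    by_cases hw2 : w = v₂
    · rw [hw2] at huw ⊢
      rw [hc0 u hu1 hu2, hc2]
      refine fun heq => ha₂F'.1 ⟨u, ?_, heq⟩
      rw [hS2def]; exact ⟨huw.symm, hu1⟩
    · have humem := hmemcompl u hu1 hu2
      have hwmem := hmemcompl w hw1 hw2
      have hadj' : (G.induce ({v₁, v₂} : Set V)ᶜ).Adj ⟨u, humem⟩ ⟨w, hwmem⟩ := by
        simpa only [comap_adj, Function.Embedding.coe_subtype] using huw
      have := hc'.1.2 _ _ hadj'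
      rw [hc0 u hu1 hu2, hc0 w hw1 hw2, hc₀eq u humem, hc₀eq w hwmem]
      exact this
  · -- oddness
    intro v hv
    by_cases hv1 : v = v₁
    · rw [hv1]
      obtain ⟨x, hx⟩ := hBadOne_mem v₁ a₂ ha₂F'.2.2
      refine ⟨x, ?_⟩
      rw [hdec v₁ x, if_neg (fun h : G.Adj v₁ v₁ ∧ x = a₁ => G.loopless.irrefl v₁ h.1)]
      have e2 : (if G.Adj v₁ v₂ ∧ x = a₂ then 1 else 0) = (if x = a₂ then 1 else 0) := by
        by_cases h : x = a₂ <;> simp [h, hadj]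
      rw [e2, add_zero]
      exact hx
    by_cases hv2 : v = v₂
    · rw [hv2]
      obtain ⟨x, hx⟩ := hBadOne_mem v₂ a₁ ha₁F'.2.2
      refine ⟨x, ?_⟩
      rw [hdec v₂ x, if_neg (fun h : G.Adj v₂ v₂ ∧ x = a₂ => G.loopless.irrefl v₂ h.1)]
      have e1 : (if G.Adj v₂ v₁ ∧ x = a₁ then 1 else 0) = (if x = a₁ then 1 else 0) := by
        by_cases h : x = a₁ <;> simp [h, hadj.symm]
      rw [e1, add_zero]
      exact hx
    by_cases hA1 : G.Adj v v₁ <;> by_cases hA2 : G.Adj v v₂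
    · -- common neighbor
      have hvKc : v ∈ Kc := by
        rw [hKcdef]; simp only [Set.mem_setOf_eq]; exact ⟨hA1.symm, hA2.symm⟩
      have hp : (a₁, a₂) ∉ BadPair v := fun h => hPmem (by
        rw [hPdef]; exact Set.mem_biUnion hvKc h)
      obtain ⟨x, hx⟩ := hBadPair_mem v hp
      refine ⟨x, ?_⟩
      rw [hdec v x]
      have e1 : (if G.Adj v v₁ ∧ x = a₁ then 1 else 0) = (if x = a₁ then 1 else 0) := by
        by_cases h : x = a₁ <;> simp [h, hA1]
      have e2 : (if G.Adj v v₂ ∧ x = a₂ then 1 else 0) = (if x = a₂ then 1 else 0) := by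
        by_cases h : x = a₂ <;> simp [h, hA2]
      rw [e1, e2]
      exact hx
    · -- neighbor of v₁ only
      have hvI : v ∈ I1 := by
        rw [hI1def]; simp only [Set.mem_setOf_eq]
        refine ⟨hA1.symm, hv2, fun h => ?_⟩
        rw [hKcdef] at h; exact hA2 h.2.symm
      obtain ⟨x, hx⟩ := hBadOne_mem v a₁ (ha₁F'.2.1 v hvI)
      refine ⟨x, ?_⟩
      rw [hdec v x, if_neg (fun h : G.Adj v v₂ ∧ x = a₂ => hA2 h.1)]
      have e1 : (if G.Adj v v₁ ∧ x = a₁ then 1 else 0) = (if x = a₁ then 1 else 0) := by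
        by_cases h : x = a₁ <;> simp [h, hA1]
      rw [e1, add_zero]
      exact hx
    · -- neighbor of v₂ only
      have hvI : v ∈ I2 := by
        rw [hI2def]; simp only [Set.mem_setOf_eq]
        refine ⟨hA2.symm, hv1, fun h => ?_⟩
        rw [hKcdef] at h; exact hA1 h.1.symm
      obtain ⟨x, hx⟩ := hBadOne_mem v a₂ (ha₂F'.2.1 v hvI)
      refine ⟨x, ?_⟩
      rw [hdec v x, if_neg (fun h : G.Adj v v₁ ∧ x = a₁ => hA1 h.1)]
      have e2 : (if G.Adj v v₂ ∧ x = a₂ then 1 else 0) = (if x = a₂ then 1 else 0) := by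
        by_cases h : x = a₂ <;> simp [h, hA2]
      rw [e2]
      exact hx
    · -- no new neighbors
      obtain ⟨w, hw⟩ := hv
      have hw1 : w ≠ v₁ := fun h => hA1 (h ▸ hw)
      have hw2 : w ≠ v₂ := fun h => hA2 (h ▸ hw)
      have hvmem := hmemcompl v hv1 hv2
      have hwmem := hmemcompl w hw1 hw2
      have hadj' : (G.induce ({v₁, v₂} : Set V)ᶜ).Adj ⟨v, hvmem⟩ ⟨w, hwmem⟩ := by
        simpa only [comap_adj, Function.Embedding.coe_subtype] using hw
      obtain ⟨x, hx⟩ := hc'.2 ⟨v, hvmem⟩ ⟨⟨w, hwmem⟩, hadj'⟩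
      rw [hcolMult v hvmem x] at hx
      refine ⟨x, ?_⟩
      rw [hdec v x, if_neg (fun h : G.Adj v v₁ ∧ x = a₁ => hA1 h.1), if_neg (fun h : G.Adj v v₂ ∧ x = a₂ => hA2 h.1), add_zero, add_zero]
      exact hx
end

section
/- If G is a K_{1,ℓ+1}-free graph with at least one edge, then G has adjacent vertices v₁, v₂ such that |N_G[v₁] ∩ N_G[v₂]| ≥ ⌈Δ(G)/ℓ⌉ + 1. -/
open SimpleGraph

variable {V : Type*}

/-- `G` is `K_{1,t+1}`-free: no vertex has an independent set of size `t+1` in its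
neighborhood, i.e. every independent set inside a neighborhood has size at most `t`. -/
def StarFree {V : Type*} (G : SimpleGraph V) (t : ℕ) : Prop :=
  ∀ (v : V) (S : Finset V), (S : Set V) ⊆ G.neighborSet v →
    (∀ a ∈ S, ∀ b ∈ S, a ≠ b → ¬ G.Adj a b) → S.card ≤ t

/-- a `K_{1,ℓ+1}`-free graph with an edge has adjacent vertices whose
closed neighborhoods intersect in at least `⌈Δ(G)/ℓ⌉ + 1` vertices. -/
theorem stmt_12 {V : Type*} [Fintype V] (G : SimpleGraph V) (ℓ : ℕ)
    (hfree : StarFree G ℓ) (hedge : ∃ u v, G.Adj u v) :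
    ∃ v₁ v₂, G.Adj v₁ v₂ ∧
      ((⌈(maxDeg G : ℝ) / (ℓ : ℝ)⌉ : ℝ) + 1) ≤
        ((closedNbr G v₁ ∩ closedNbr G v₂).ncard : ℝ) := by

  classical
  obtain ⟨u0, v0, huv⟩ := hedge
  -- ℓ ≥ 1
  have hℓ : 1 ≤ ℓ := by
    have h1 : ({u0} : Set V) ⊆ G.neighborSet v0 := by
      intro x hx; simp at hx; subst hx; exact huv.symm
    have := hfree v0 {u0} (by simpa using h1) (by simp)
    simpa using this
  have hℓR : (0 : ℝ) < (ℓ : ℝ) := by exact_mod_cast hℓ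
  -- vertex of maximum degree
  have hbdd : BddAbove (Set.range fun v => deg G v) :=
    Set.Finite.bddAbove (Set.finite_range _)
  have hmem : maxDeg G ∈ Set.range fun v => deg G v :=
    Nat.sSup_mem ⟨deg G u0, ⟨u0, rfl⟩⟩ hbdd
  obtain ⟨v, hv⟩ := hmem
  have hd0 : 1 ≤ deg G u0 := by
    have hne : (G.neighborSet u0).Nonempty := ⟨v0, huv⟩
    have := Set.ncard_pos (Set.toFinite _) |>.mpr hne
    exact this
  have hΔ1 : 1 ≤ maxDeg G := le_trans hd0 (le_csSup hbdd ⟨u0, rfl⟩)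
  set Δ := maxDeg G with hΔdef
  -- the neighborhood of v
  set N : Finset V := (G.neighborSet v).toFinset with hN
  have hNcard : N.card = Δ := by
    rw [hN, ← Set.ncard_eq_toFinset_card']; exact hv
  have hNmem : ∀ w, w ∈ N ↔ G.Adj v w := by intro w; simp [hN]
  have hNne : N.Nonempty := by
    rw [← Finset.card_pos, hNcard]; exact hΔ1
  -- maximal independent set S in N
  have hsetne : (N.powerset.filter (fun S =>
      ∀ a ∈ S, ∀ b ∈ S, a ≠ b → ¬ G.Adj a b)).Nonempty := by
    refine ⟨∅, ?_⟩; simp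
  obtain ⟨S, hSmem, hSmax⟩ := Finset.exists_max_image _ Finset.card hsetne
  simp only [Finset.mem_filter, Finset.mem_powerset] at hSmem
  obtain ⟨hSsub, hSind⟩ := hSmem
  have hSN : ∀ a ∈ S, G.Adj v a := fun a ha => (hNmem a).mp (hSsub ha)
  have hScard : S.card ≤ ℓ := by
    refine hfree v S ?_ hSind
    intro a ha; exact hSN a (by simpa using ha)
  -- every w ∈ N is covered by some u ∈ S
  have hcover : ∀ w ∈ N, ∃ u ∈ S, w = u ∨ G.Adj u w := by
    intro w hw
    by_cases hwS : w ∈ S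
    · exact ⟨w, hwS, Or.inl rfl⟩
    by_contra hcon
    push_neg at hcon
    have hadj : ∀ u ∈ S, ¬ G.Adj u w := by
      intro u hu
      exact (hcon u hu).2
    have hmemins : insert w S ∈ N.powerset.filter (fun S =>
        ∀ a ∈ S, ∀ b ∈ S, a ≠ b → ¬ G.Adj a b) := by
      simp only [Finset.mem_filter, Finset.mem_powerset]
      constructor
      · exact Finset.insert_subset hw hSsub
      · intro a ha b hb hab
        rcases Finset.mem_insert.mp ha with ha' | ha
        · rcases Finset.mem_insert.mp hb with hb' | hb
          · exact absurd (ha'.trans hb'.symm) hab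
          · rw [ha']; intro h; exact hadj b hb h.symm
        · rcases Finset.mem_insert.mp hb with hb' | hb
          · rw [hb']; exact hadj a ha
          · exact hSind a ha b hb hab
    have := hSmax _ hmemins
    rw [Finset.card_insert_of_notMem hwS] at this
    omega
  -- choice function
  choose! f hfS hfadj using hcover
  -- integer arithmetic
  set c : ℤ := ⌈(Δ : ℝ) / (ℓ : ℝ)⌉ with hc
  have hc1 : 1 ≤ c := by
    rw [hc]
    refine Int.ceil_pos.mpr ?_
    exact div_pos (by exact_mod_cast hΔ1) hℓR
  set n : ℕ := (c - 1).toNat with hn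
  have hnc : (n : ℤ) = c - 1 := Int.toNat_of_nonneg (by omega)
  have hmul : ℓ * n < Δ := by
    have h1 : ((c : ℝ) - 1) < (Δ : ℝ) / (ℓ : ℝ) := by
      have := Int.ceil_lt_add_one ((Δ : ℝ) / (ℓ : ℝ))
      rw [← hc] at this; linarith
    have h2 : ((c : ℝ) - 1) * (ℓ : ℝ) < (Δ : ℝ) := (lt_div_iff₀ hℓR).mp h1
    have h3 : ((ℓ * n : ℕ) : ℝ) < (Δ : ℝ) := by
      push_cast
      have : ((n : ℝ)) = (c : ℝ) - 1 := by exact_mod_cast hnc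
      rw [this]; linarith [h2]
    exact_mod_cast h3
  have hmul2 : S.card * n < N.card := by
    rw [hNcard]
    calc S.card * n ≤ ℓ * n := Nat.mul_le_mul_right n hScard
      _ < Δ := hmul
  -- pigeonhole
  have hmaps : ∀ w ∈ N, f w ∈ S := hfS
  obtain ⟨u, huS, hfib⟩ :=
    Finset.exists_lt_card_fiber_of_mul_lt_card_of_maps_to hmaps hmul2
  set F : Finset V := N.filter (fun w => f w = u) with hF
  have hvu : G.Adj v u := hSN u huS
  refine ⟨v, u, hvu, ?_⟩
  -- insert v F ⊆ closedNbr v ∩ closedNbr u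
  have hvnotF : v ∉ F := by
    rw [hF]; intro h
    exact G.irrefl ((hNmem v).mp (Finset.mem_filter.mp h).1)
  have hsub : ((insert v F : Finset V) : Set V) ⊆ closedNbr G v ∩ closedNbr G u := by
    intro x hx
    simp only [Finset.coe_insert, Set.mem_insert_iff, Finset.mem_coe] at hx
    rcases hx with rfl | hx
    · constructor
      · exact Set.mem_insert _ _
      · exact Set.mem_insert_of_mem _ hvu.symm
    · rw [hF, Finset.mem_filter] at hx
      obtain ⟨hxN, hxf⟩ := hx
      constructor
      · exact Set.mem_insert_of_mem _ ((hNmem x).mp hxN)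
      · rcases hfadj x hxN with heq | hadj
        · rw [heq, hxf]; exact Set.mem_insert _ _
        · rw [hxf] at hadj
          exact Set.mem_insert_of_mem _ ((G.mem_neighborSet u x).mpr hadj)
  have hcard : (insert v F).card = F.card + 1 := Finset.card_insert_of_notMem hvnotF
  have hXfin : (closedNbr G v ∩ closedNbr G u).Finite := Set.toFinite _
  have hle : (insert v F).card ≤ (closedNbr G v ∩ closedNbr G u).ncard := by
    have := Set.ncard_le_ncard hsub hXfin
    rwa [Set.ncard_coe_finset] at this
  have hFc : c ≤ (F.card : ℤ) := by
    have : n < F.card := hfib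
    omega
  have hfinal : c + 1 ≤ ((closedNbr G v ∩ closedNbr G u).ncard : ℤ) := by
    have : (insert v F).card ≤ (closedNbr G v ∩ closedNbr G u).ncard := hle
    rw [hcard] at this
    have h2 : ((F.card : ℤ) + 1) ≤ ((closedNbr G v ∩ closedNbr G u).ncard : ℤ) := by
      exact_mod_cast this
    omega
  have : ((c : ℝ) + 1) ≤ ((closedNbr G v ∩ closedNbr G u).ncard : ℝ) := by
    exact_mod_cast hfinal
  simpa [hc] using this
end

section
/- If G is a claw-free graph and v₁, v₂ are adjacent vertices with v₁ of maximum degree, then (N_G(v₁) \ N_G[v₂]) ∪ {v₁} is a clique of size Δ(G) − |N_G[v₁] ∩ N_G[v₂]| + 2. -/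
open SimpleGraph

variable {V : Type*}

/-- in a claw-free graph, for adjacent `v₁, v₂` with `v₁` of maximum
degree, `(N(v₁) \ N[v₂]) ∪ {v₁}` is a clique of size `Δ(G) − |N[v₁] ∩ N[v₂]| + 2`. -/
theorem stmt_13 {V : Type*} [Fintype V] (G : SimpleGraph V)
    (hclaw : StarFree G 2) (v₁ v₂ : V)
    (hmax : deg G v₁ = maxDeg G) (hadj : G.Adj v₁ v₂) :
    G.IsClique ((G.neighborSet v₁ \ closedNbr G v₂) ∪ {v₁}) ∧
    ((((G.neighborSet v₁ \ closedNbr G v₂) ∪ {v₁}).ncard : ℤ) =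
      (maxDeg G : ℤ) - ((closedNbr G v₁ ∩ closedNbr G v₂).ncard : ℤ) + 2) := by

  classical
  set S := G.neighborSet v₁ \ closedNbr G v₂ with hS
  have hv2S : v₂ ∉ S := fun h => h.2 (Or.inl rfl)
  have hSadj : ∀ x ∈ S, G.Adj v₁ x := fun x hx => hx.1
  have hSnadj : ∀ x ∈ S, ¬ G.Adj x v₂ := fun x hx h => hx.2 (Or.inr h.symm)
  have hSne : ∀ x ∈ S, x ≠ v₂ := fun x hx h => hx.2 (Or.inl h)
  have hclique : G.IsClique (S ∪ {v₁}) := by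
    rintro x (hx | hx) y (hy | hy) hxy
    · -- both in S
      by_contra hnadj
      have hsub : (({x, y, v₂} : Finset V) : Set V) ⊆ G.neighborSet v₁ := by
        intro z hz
        simp only [Finset.coe_insert, Finset.coe_singleton, Set.mem_insert_iff,
          Set.mem_singleton_iff] at hz
        rcases hz with rfl | rfl | rfl
        · exact hSadj _ hx
        · exact hSadj _ hy
        · exact hadj
      have hind : ∀ a ∈ ({x, y, v₂} : Finset V), ∀ b ∈ ({x, y, v₂} : Finset V),
          a ≠ b → ¬ G.Adj a b := by
        intro a ha b hb hab
        simp only [Finset.mem_insert, Finset.mem_singleton] at ha hb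
        rcases ha with rfl | rfl | rfl <;> rcases hb with rfl | rfl | rfl <;>
          first
          | exact absurd rfl hab
          | exact hnadj
          | exact fun h => hnadj h.symm
          | exact hSnadj _ hx
          | exact fun h => hSnadj _ hx h.symm
          | exact hSnadj _ hy
          | exact fun h => hSnadj _ hy h.symm
      have hcard : ({x, y, v₂} : Finset V).card = 3 := by
        rw [Finset.card_insert_of_notMem, Finset.card_insert_of_notMem,
          Finset.card_singleton]
        · simp [hSne _ hy]
        · simp [hxy, hSne _ hx]
      have := hclaw v₁ {x, y, v₂} hsub hind
      omega
    · -- y = v₁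
      rcases hy with rfl
      exact (hSadj _ hx).symm
    · rcases hx with rfl
      exact hSadj _ hy
    · rcases hx with rfl; rcases hy with rfl; exact absurd rfl hxy
  refine ⟨hclique, ?_⟩
  have hv1S : v₁ ∉ S := fun h => G.loopless.irrefl v₁ h.1
  have h1 : (S ∪ {v₁}).ncard = S.ncard + 1 := by
    rw [Set.union_singleton, Set.ncard_insert_of_notMem hv1S S.toFinite]
  have h2 : S.ncard + (G.neighborSet v₁ ∩ closedNbr G v₂).ncard
      = (G.neighborSet v₁).ncard := by
    rw [← Set.ncard_union_eq (Set.disjoint_of_subset_right Set.inter_subset_right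
      Set.disjoint_sdiff_left) (Set.toFinite _) (Set.toFinite _),
      Set.diff_union_inter]
  have h3 : closedNbr G v₁ ∩ closedNbr G v₂
      = insert v₁ (G.neighborSet v₁ ∩ closedNbr G v₂) := by
    ext z
    simp only [closedNbr, Set.mem_inter_iff, Set.mem_insert_iff, mem_neighborSet]
    constructor
    · rintro ⟨rfl | hz, hz2⟩
      · exact Or.inl rfl
      · exact Or.inr ⟨hz, hz2⟩
    · rintro (rfl | ⟨hz, hz2⟩)
      · exact ⟨Or.inl rfl, Or.inr hadj.symm⟩
      · exact ⟨Or.inr hz, hz2⟩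
  have hv1nmem : v₁ ∉ G.neighborSet v₁ ∩ closedNbr G v₂ := fun h => G.loopless.irrefl v₁ h.1
  have h4 : (closedNbr G v₁ ∩ closedNbr G v₂).ncard
      = (G.neighborSet v₁ ∩ closedNbr G v₂).ncard + 1 := by
    rw [h3, Set.ncard_insert_of_notMem hv1nmem (Set.toFinite _)]
  have hdeg : (G.neighborSet v₁).ncard = maxDeg G := hmax
  rw [h1, h4]
  push_cast
  omega
end

section
/- If G is a chordal graph with Δ(G) ≥ 3, then χ_pcf(G) ≤ Δ(G) + 1. -/
open SimpleGraph

variable {V : Type*}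

/-- The simplicial clique at position `i` of an ordering. -/
def laterClique {V : Type*} {n : ℕ} (G : SimpleGraph V) (σ : Fin n ≃ V) (i : Fin n) :
    Set V :=
  {σ i} ∪ {u | ∃ j : Fin n, i < j ∧ σ j = u ∧ G.Adj (σ i) u}

/-- `σ` is a simplicial ordering. -/
def IsSimplicialOrdering {V : Type*} {n : ℕ} (G : SimpleGraph V) (σ : Fin n ≃ V) : Prop :=
  ∀ i, G.IsClique (laterClique G σ i)

/-- `G` is chordal: it admits a simplicial ordering. -/
def IsChordal {V : Type*} [Fintype V] (G : SimpleGraph V) : Prop :=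
  ∃ σ : Fin (Fintype.card V) ≃ V, IsSimplicialOrdering G σ

section Greedy

variable {V : Type*} [Fintype V]

/-- Multiplicity of color `a` among neighbors of `u` with index `≥ t`. -/
noncomputable def mmul (G : SimpleGraph V) (σ : Fin (Fintype.card V) ≃ V) (c : V → ℕ)
    (t : ℕ) (u : V) (a : ℕ) : ℕ :=
  {w | G.Adj u w ∧ t ≤ (σ.symm w : ℕ) ∧ c w = a}.ncard

/-- Later neighbors (parents) of `v`. -/
def Pset (G : SimpleGraph V) (σ : Fin (Fintype.card V) ≃ V) (v : V) : Set V :=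
  {u | G.Adj v u ∧ (σ.symm v : ℕ) < (σ.symm u : ℕ)}

/-- Forbidden colors when coloring `v`. -/
noncomputable def badSet (G : SimpleGraph V) (σ : Fin (Fintype.card V) ≃ V) (c : V → ℕ)
    (v : V) : Set ℕ :=
  (c '' Pset G σ v) ∪
    {a | ∃ u ∈ Pset G σ v, {b | mmul G σ c ((σ.symm v : ℕ) + 1) u b = 1} = {a}}

noncomputable def pick (D : ℕ) (B : Set ℕ) : ℕ := sInf {x | x < D + 1 ∧ x ∉ B}

noncomputable def greedy (G : SimpleGraph V) (σ : Fin (Fintype.card V) ≃ V) (D : ℕ) :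
    V → ℕ :=
  fun v =>
    pick D (badSet G σ
      (fun u => if h : (σ.symm v : ℕ) < (σ.symm u : ℕ) then greedy G σ D u else 0) v)
termination_by v => Fintype.card V - (σ.symm v : ℕ)
decreasing_by
  have := (σ.symm u).is_lt
  omega

lemma mmul_congr {G : SimpleGraph V} {σ : Fin (Fintype.card V) ≃ V} {c₁ c₂ : V → ℕ}
    {t : ℕ} (h : ∀ w, t ≤ (σ.symm w : ℕ) → c₁ w = c₂ w) (u : V) (a : ℕ) :
    mmul G σ c₁ t u a = mmul G σ c₂ t u a := by
  unfold mmul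
  congr 1
  ext w
  simp only [Set.mem_setOf_eq]
  constructor
  · rintro ⟨h1, h2, h3⟩; exact ⟨h1, h2, (h w h2) ▸ h3⟩
  · rintro ⟨h1, h2, h3⟩; exact ⟨h1, h2, (h w h2) ▸ h3⟩

lemma badSet_congr {G : SimpleGraph V} {σ : Fin (Fintype.card V) ≃ V} {c₁ c₂ : V → ℕ}
    {v : V} (h : ∀ u, (σ.symm v : ℕ) < (σ.symm u : ℕ) → c₁ u = c₂ u) :
    badSet G σ c₁ v = badSet G σ c₂ v := by
  unfold badSet
  have h' : ∀ w, (σ.symm v : ℕ) + 1 ≤ (σ.symm w : ℕ) → c₁ w = c₂ w := fun w hw => h w hw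
  congr 1
  · exact Set.image_congr (fun u hu => h u hu.2)
  · ext a
    simp only [Set.mem_setOf_eq]
    constructor
    · rintro ⟨u, hu, hs⟩
      exact ⟨u, hu, by rw [← hs]; ext b; simp [mmul_congr h' u b]⟩
    · rintro ⟨u, hu, hs⟩
      exact ⟨u, hu, by rw [← hs]; ext b; simp [mmul_congr h' u b]⟩

lemma greedy_eq (G : SimpleGraph V) (σ : Fin (Fintype.card V) ≃ V) (D : ℕ) (v : V) :
    greedy G σ D v = pick D (badSet G σ (greedy G σ D) v) := by
  rw [greedy]
  congr 1
  apply badSet_congr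
  intro u hu
  simp [hu]

end Greedy

section Proofs

variable {V : Type*} [Fintype V]

lemma pick_lt (D : ℕ) (B : Set ℕ) : pick D B < D + 1 := by
  unfold pick
  rcases Set.eq_empty_or_nonempty {x | x < D + 1 ∧ x ∉ B} with h | h
  · rw [h]; simpa [Nat.sInf_empty] using Nat.succ_pos D
  · exact (Nat.sInf_mem h).1

lemma pick_not_mem {D : ℕ} {B : Set ℕ} (hB : B.Finite) (h : B.ncard ≤ D) :
    pick D B ∉ B := by
  have hne : {x | x < D + 1 ∧ x ∉ B}.Nonempty := by
    by_contra hc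
    rw [Set.not_nonempty_iff_eq_empty] at hc
    have hsub : Finset.range (D + 1) ⊆ hB.toFinset := by
      intro x hx
      simp only [Finset.mem_range] at hx
      simp only [Set.Finite.mem_toFinset]
      by_contra hxB
      have : x ∈ {x | x < D + 1 ∧ x ∉ B} := ⟨hx, hxB⟩
      rw [hc] at this; simp at this
    have h2 := Finset.card_le_card hsub
    rw [Finset.card_range] at h2
    rw [Set.ncard_eq_toFinset_card _ hB] at h
    omega
  exact (Nat.sInf_mem hne).2

variable {G : SimpleGraph V} {σ : Fin (Fintype.card V) ≃ V}

/-- Properness restricted to indices `≥ t`. -/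
def ProperAt (G : SimpleGraph V) (σ : Fin (Fintype.card V) ≃ V) (c : V → ℕ) (t : ℕ) : Prop :=
  ∀ u w, t ≤ (σ.symm u : ℕ) → t ≤ (σ.symm w : ℕ) → G.Adj u w → c u ≠ c w

/-- PCF condition restricted to indices `≥ t`. -/
def PCFAt (G : SimpleGraph V) (σ : Fin (Fintype.card V) ≃ V) (c : V → ℕ) (t : ℕ) : Prop :=
  ∀ u, t ≤ (σ.symm u : ℕ) → (∃ w, G.Adj u w ∧ t ≤ (σ.symm w : ℕ)) →
    ∃ a, mmul G σ c t u a = 1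

lemma pset_clique (hσ : IsSimplicialOrdering G σ) (v : V) {u w : V}
    (hu : u ∈ Pset G σ v) (hw : w ∈ Pset G σ v) (hne : u ≠ w) : G.Adj u w := by
  have h := hσ (σ.symm v)
  have hmem : ∀ x, x ∈ Pset G σ v → x ∈ laterClique G σ (σ.symm v) := by
    intro x hx
    right
    refine ⟨σ.symm x, ?_, σ.apply_symm_apply x, ?_⟩
    · exact hx.2
    · rw [σ.apply_symm_apply]; exact hx.1
  exact h (hmem u hu) (hmem w hw) hne

lemma inj_on_pset (hσ : IsSimplicialOrdering G σ) {c : V → ℕ} {t : ℕ}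
    (hp : ProperAt G σ c (t + 1)) {v : V} (hv : (σ.symm v : ℕ) = t) :
    Set.InjOn c (Pset G σ v) := by
  intro u hu w hw hcw
  by_contra hne
  have h1 : t + 1 ≤ (σ.symm u : ℕ) := by have := hu.2; omega
  have h2 : t + 1 ≤ (σ.symm w : ℕ) := by have := hw.2; omega
  exact hp u w h1 h2 (pset_clique hσ v hu hw hne) hcw

end Proofs

section Counting

variable {V : Type*} [Fintype V] {G : SimpleGraph V} {σ : Fin (Fintype.card V) ≃ V}

lemma bad_card (hσ : IsSimplicialOrdering G σ) {c : V → ℕ} {D : ℕ}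
    (hDdeg : ∀ x, (G.neighborSet x).ncard ≤ D) {v : V}
    (hp : ProperAt G σ c ((σ.symm v : ℕ) + 1)) :
    (badSet G σ c v).ncard ≤ D := by
  classical
  set t : ℕ := (σ.symm v : ℕ) with ht
  set P : Set V := Pset G σ v with hP
  set d : ℕ := P.ncard with hd
  have hPsub : P ⊆ G.neighborSet v := fun u hu => hu.1
  have hdD : d ≤ D := le_trans (Set.ncard_le_ncard hPsub (Set.toFinite _)) (hDdeg v)
  have hinj : Set.InjOn c P := inj_on_pset hσ hp rfl
  set Frag : Set ℕ := {a | ∃ u ∈ P, {b | mmul G σ c (t + 1) u b = 1} = {a}} with hFrag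
  have hbad : badSet G σ c v = (c '' P) ∪ Frag := rfl
  have hFragSub : Frag ⊆ (fun u => sInf {b | mmul G σ c (t + 1) u b = 1}) '' P := by
    rintro a ⟨u, huP, hS⟩
    refine ⟨u, huP, ?_⟩
    show sInf {b | mmul G σ c (t + 1) u b = 1} = a
    rw [hS]; exact csInf_singleton a
  have hFragCard : Frag.ncard ≤ d :=
    le_trans (Set.ncard_le_ncard hFragSub (Set.toFinite _)) (Set.ncard_image_le (Set.toFinite _))
  by_cases hFC : Frag ⊆ c '' P
  · have : badSet G σ c v ⊆ c '' P := by rw [hbad]; exact Set.union_subset subset_rfl hFC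
    calc (badSet G σ c v).ncard ≤ (c '' P).ncard := Set.ncard_le_ncard this (Set.toFinite _)
      _ ≤ d := Set.ncard_image_le (Set.toFinite _)
      _ ≤ D := hdD
  · -- there is a fragile parent whose unique color is outside the parent colors
    rw [Set.not_subset] at hFC
    obtain ⟨a, haF, haC⟩ := hFC
    obtain ⟨u, huP, hS⟩ := haF
    -- the color a appears exactly once (carrier y)
    have hma : mmul G σ c (t + 1) u a = 1 := by
      have : a ∈ {b | mmul G σ c (t + 1) u b = 1} := by rw [hS]; rfl
      exact this
    obtain ⟨y, hy⟩ := Set.ncard_eq_one.mp hma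
    have hyA : G.Adj u y ∧ t + 1 ≤ (σ.symm y : ℕ) ∧ c y = a := by
      have : y ∈ ({y} : Set V) := rfl
      rw [← hy] at this; exact this
    set P' : Set V := P \ {u} with hP'
    have hP'card : P'.ncard = d - 1 := Set.ncard_diff_singleton_of_mem huP
    have hd1 : 1 ≤ d := by
      rw [hd]; exact (Set.ncard_pos (Set.toFinite _)).mpr ⟨u, huP⟩
    -- every other parent's color is duplicated in u's later neighborhood
    have hdup : ∀ w ∈ P', ∃ x, (G.Adj u x ∧ t + 1 ≤ (σ.symm x : ℕ) ∧ c x = c w) ∧ x ≠ w := by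
      intro w hw
      have hwP : w ∈ P := hw.1
      have hwu : u ≠ w := fun h => hw.2 (by rw [← h]; rfl)
      have hadj : G.Adj u w := pset_clique hσ v huP hwP hwu
      have hcwa : c w ≠ a := fun h => haC ⟨w, hwP, h⟩
      have hwin : w ∈ {x | G.Adj u x ∧ t + 1 ≤ (σ.symm x : ℕ) ∧ c x = c w} :=
        ⟨hadj, by have := hwP.2; omega, rfl⟩
      have hne1 : mmul G σ c (t + 1) u (c w) ≠ 1 := by
        intro h1
        have : c w ∈ {b | mmul G σ c (t + 1) u b = 1} := h1
        rw [hS] at this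
        exact hcwa this
      by_contra hcon
      push_neg at hcon
      apply hne1
      have hsub : {x | G.Adj u x ∧ t + 1 ≤ (σ.symm x : ℕ) ∧ c x = c w} = {w} := by
        apply Set.eq_singleton_iff_unique_mem.mpr
        exact ⟨hwin, fun x hx => hcon x hx⟩
      unfold mmul
      rw [hsub, Set.ncard_singleton]
    choose! f hf1 hf2 using hdup
    -- f is injective on P' and avoids P'
    have hfinj : Set.InjOn f P' := by
      intro w1 h1 w2 h2 heq
      have e1 : c (f w1) = c w1 := (hf1 w1 h1).2.2
      have e2 : c (f w2) = c w2 := (hf1 w2 h2).2.2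
      exact hinj h1.1 h2.1 (by rw [← e1, ← e2, heq])
    have hA2card : (f '' P').ncard = d - 1 := by
      rw [Set.ncard_image_of_injOn hfinj, hP'card]
    have hdisj : Disjoint P' (f '' P') := by
      rw [Set.disjoint_left]
      rintro x hxP' ⟨w, hwP', hfw⟩
      have : c x = c w := by rw [← hfw]; exact (hf1 w hwP').2.2
      have : x = w := hinj hxP'.1 hwP'.1 this
      exact hf2 w hwP' (hfw.trans this)
    have hU1 : (P' ∪ f '' P').ncard = (d - 1) + (d - 1) := by
      rw [Set.ncard_union_eq hdisj, hP'card, hA2card]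
    have hynotin : y ∉ P' ∪ f '' P' := by
      rintro (hyP' | ⟨w, hwP', hfw⟩)
      · exact haC ⟨y, hyP'.1, hyA.2.2⟩
      · have h1 : c y = c w := by rw [← hfw]; exact (hf1 w hwP').2.2
        have h2 : c w ≠ a := fun h => haC ⟨w, hwP'.1, h⟩
        exact h2 (by rw [← h1, hyA.2.2])
    have hins1 : (insert y (P' ∪ f '' P')).ncard = (d - 1) + (d - 1) + 1 := by
      rw [Set.ncard_insert_of_notMem hynotin, hU1]
    have hvnotin : v ∉ insert y (P' ∪ f '' P') := by
      have hvt : (σ.symm v : ℕ) = t := rfl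
      rintro (rfl | hvm)
      · have := hyA.2.1; omega
      · rcases hvm with hvP' | ⟨w, hwP', hfw⟩
        · have := hvP'.1.2; omega
        · have := (hf1 w hwP').2.1; rw [hfw] at this; omega
    have hins2 : (insert v (insert y (P' ∪ f '' P'))).ncard = (d - 1) + (d - 1) + 2 := by
      rw [Set.ncard_insert_of_notMem hvnotin, hins1]
    have hsubN : insert v (insert y (P' ∪ f '' P')) ⊆ G.neighborSet u := by
      rintro x (rfl | rfl | hxP' | ⟨w, hwP', hfw⟩)
      · exact (huP.1).symm
      · exact hyA.1
      · exact pset_clique hσ v huP hxP'.1 (fun h => hxP'.2 (by rw [← h]; rfl))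
      · rw [← hfw]; exact (hf1 w hwP').1
    have hNu : (d - 1) + (d - 1) + 2 ≤ (G.neighborSet u).ncard := by
      rw [← hins2]
      exact Set.ncard_le_ncard hsubN (Set.toFinite _)
    have h2d : 2 * d ≤ D := by
      have := hDdeg u
      omega
    calc (badSet G σ c v).ncard ≤ (c '' P).ncard + Frag.ncard := by
          rw [hbad]; exact Set.ncard_union_le _ _
      _ ≤ d + d := Nat.add_le_add (Set.ncard_image_le (Set.toFinite _)) hFragCard
      _ ≤ D := by omega

end Counting

section Step

variable {V : Type*} [Fintype V] {G : SimpleGraph V} {σ : Fin (Fintype.card V) ≃ V}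

lemma bad_finite (G : SimpleGraph V) (σ : Fin (Fintype.card V) ≃ V) (c : V → ℕ) (v : V) :
    (badSet G σ c v).Finite := by
  apply Set.Finite.union
  · exact Set.Finite.image _ (Set.toFinite _)
  · apply Set.Finite.subset
      (Set.Finite.image (fun u => sInf {b | mmul G σ c ((σ.symm v : ℕ) + 1) u b = 1})
        (Set.toFinite (Pset G σ v)))
    rintro a ⟨u, huP, hS⟩
    refine ⟨u, huP, ?_⟩
    show sInf {b | mmul G σ c ((σ.symm v : ℕ) + 1) u b = 1} = a
    rw [hS]; exact csInf_singleton a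

lemma not_mem_bad (hσ : IsSimplicialOrdering G σ) {D : ℕ}
    (hDdeg : ∀ x, (G.neighborSet x).ncard ≤ D) {v : V}
    (hp : ProperAt G σ (greedy G σ D) ((σ.symm v : ℕ) + 1)) :
    greedy G σ D v ∉ badSet G σ (greedy G σ D) v := by
  rw [greedy_eq]
  exact pick_not_mem (bad_finite G σ _ v) (bad_card hσ hDdeg hp)

lemma index_dichotomy {t : ℕ} (ht : t < Fintype.card V) (w : V)
    (hw : t ≤ (σ.symm w : ℕ)) : w = σ ⟨t, ht⟩ ∨ t + 1 ≤ (σ.symm w : ℕ) := by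
  by_cases h : (σ.symm w : ℕ) = t
  · left
    have : σ.symm w = ⟨t, ht⟩ := Fin.ext h
    rw [← this, σ.apply_symm_apply]
  · right; omega

lemma inv_step (hσ : IsSimplicialOrdering G σ) {D : ℕ}
    (hDdeg : ∀ x, (G.neighborSet x).ncard ≤ D) {t : ℕ} (ht : t < Fintype.card V)
    (h1 : ProperAt G σ (greedy G σ D) (t + 1)) (h2 : PCFAt G σ (greedy G σ D) (t + 1)) :
    ProperAt G σ (greedy G σ D) t ∧ PCFAt G σ (greedy G σ D) t := by
  classical
  set c : V → ℕ := greedy G σ D with hc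
  set v : V := σ ⟨t, ht⟩ with hv
  have hvt : (σ.symm v : ℕ) = t := by rw [hv, σ.symm_apply_apply]
  have hpv : ProperAt G σ c ((σ.symm v : ℕ) + 1) := by rw [hvt]; exact h1
  have hnb : c v ∉ badSet G σ c v := not_mem_bad hσ hDdeg hpv
  have hbadeq : badSet G σ c v =
      (c '' Pset G σ v) ∪
        {a | ∃ u ∈ Pset G σ v, {b | mmul G σ c (t + 1) u b = 1} = {a}} := by
    rw [badSet, hvt]
  rw [hbadeq] at hnb
  have hinj : Set.InjOn c (Pset G σ v) := inj_on_pset hσ h1 hvt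
  -- useful: membership in Pset from adjacency and late index
  have hPmem : ∀ z, G.Adj v z → t + 1 ≤ (σ.symm z : ℕ) → z ∈ Pset G σ v := by
    intro z h1' h2'
    exact ⟨h1', by omega⟩
  constructor
  · -- ProperAt t
    intro x y hx hy hadj
    rcases index_dichotomy ht x hx with rfl | hx1
    · rcases index_dichotomy ht y hy with rfl | hy1
      · exact absurd hadj (G.irrefl)
      · intro he
        exact hnb (Or.inl ⟨y, hPmem y hadj hy1, he.symm⟩)
    · rcases index_dichotomy ht y hy with rfl | hy1
      · intro he
        exact hnb (Or.inl ⟨x, hPmem x hadj.symm hx1, he⟩)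
      · exact h1 x y hx1 hy1 hadj
  · -- PCFAt t
    intro x hx hex
    obtain ⟨w, hwadj, hwt⟩ := hex
    rcases index_dichotomy ht x hx with rfl | hx1
    · -- x = v : all parents have distinct colors
      have hwP : w ∈ Pset G σ v := by
        rcases index_dichotomy ht w hwt with rfl | hw1
        · exact absurd hwadj (G.irrefl)
        · exact hPmem w hwadj hw1
      refine ⟨c w, ?_⟩
      have hset : {z | G.Adj v z ∧ t ≤ (σ.symm z : ℕ) ∧ c z = c w} = {w} := by
        ext z
        constructor
        · rintro ⟨h1', h2', h3'⟩
          have hzP : z ∈ Pset G σ v := by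
            rcases index_dichotomy ht z h2' with rfl | hz1
            · exact absurd h1' (G.irrefl)
            · exact hPmem z h1' hz1
          exact hinj hzP hwP h3'
        · rintro rfl
          exact ⟨hwP.1, by have := hwP.2; omega, rfl⟩
      unfold mmul
      rw [hset, Set.ncard_singleton]
    · by_cases hadjxv : G.Adj x v
      · -- x is a parent of v
        have hxP : x ∈ Pset G σ v := hPmem x hadjxv.symm hx1
        -- helper: mmul stays the same for colors ≠ c v
        have hstable : ∀ a, c v ≠ a → mmul G σ c t x a = mmul G σ c (t + 1) x a := by
          intro a hne
          unfold mmul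
          congr 1
          ext z
          simp only [Set.mem_setOf_eq]
          constructor
          · rintro ⟨h1', h2', h3'⟩
            rcases index_dichotomy ht z h2' with rfl | hz1
            · exact absurd h3' hne
            · exact ⟨h1', hz1, h3'⟩
          · rintro ⟨h1', h2', h3'⟩
            exact ⟨h1', by omega, h3'⟩
        by_cases hlater : ∃ z, G.Adj x z ∧ t + 1 ≤ (σ.symm z : ℕ)
        · obtain ⟨a₀, ha₀⟩ := h2 x hx1 hlater
          by_cases hsecond : ∃ a₁, mmul G σ c (t + 1) x a₁ = 1 ∧ a₁ ≠ a₀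
          · obtain ⟨a₁, ha₁, hne01⟩ := hsecond
            rcases eq_or_ne (c v) a₀ with h0 | h0
            · refine ⟨a₁, ?_⟩
              rw [hstable a₁ (by rw [h0]; exact hne01.symm)]
              exact ha₁
            · exact ⟨a₀, by rw [hstable a₀ h0]; exact ha₀⟩
          · -- fragile: unique color set is exactly {a₀}
            push_neg at hsecond
            have hSset : {b | mmul G σ c (t + 1) x b = 1} = {a₀} := by
              apply Set.eq_singleton_iff_unique_mem.mpr
              refine ⟨ha₀, fun b hb => ?_⟩
              by_contra hbne
              exact hbne (hsecond b hb)
            have hmem : a₀ ∈ (c '' Pset G σ v) ∪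
                {a | ∃ u ∈ Pset G σ v, {b | mmul G σ c (t + 1) u b = 1} = {a}} :=
              Or.inr ⟨x, hxP, hSset⟩
            have hcv : c v ≠ a₀ := fun he => hnb (he ▸ hmem)
            exact ⟨a₀, by rw [hstable a₀ hcv]; exact ha₀⟩
        · -- v is the only later neighbor of x
          refine ⟨c v, ?_⟩
          have hset : {z | G.Adj x z ∧ t ≤ (σ.symm z : ℕ) ∧ c z = c v} = {v} := by
            ext z
            constructor
            · rintro ⟨h1', h2', h3'⟩
              rcases index_dichotomy ht z h2' with rfl | hz1
              · rfl
              · exact absurd ⟨z, h1', hz1⟩ hlater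
            · rintro rfl
              exact ⟨hadjxv, by omega, rfl⟩
          unfold mmul
          rw [hset, Set.ncard_singleton]
      · -- x not adjacent to v : nothing changes for x
        have hw1 : t + 1 ≤ (σ.symm w : ℕ) := by
          rcases index_dichotomy ht w hwt with rfl | h
          · exact absurd hwadj hadjxv
          · exact h
        obtain ⟨a, ha⟩ := h2 x hx1 ⟨w, hwadj, hw1⟩
        refine ⟨a, ?_⟩
        rw [← ha]
        unfold mmul
        congr 1
        ext z
        simp only [Set.mem_setOf_eq]
        constructor
        · rintro ⟨h1', h2', h3'⟩
          rcases index_dichotomy ht z h2' with rfl | hz1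
          · exact absurd h1' hadjxv
          · exact ⟨h1', hz1, h3'⟩
        · rintro ⟨h1', h2', h3'⟩
          exact ⟨h1', by omega, h3'⟩

end Step

section Descent

variable {V : Type*} [Fintype V] {G : SimpleGraph V} {σ : Fin (Fintype.card V) ≃ V}

lemma inv_all (hσ : IsSimplicialOrdering G σ) {D : ℕ}
    (hDdeg : ∀ x, (G.neighborSet x).ncard ≤ D) :
    ∀ k, ProperAt G σ (greedy G σ D) (Fintype.card V - k) ∧
      PCFAt G σ (greedy G σ D) (Fintype.card V - k) := by
  intro k
  induction k with
  | zero =>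
    constructor
    · intro u w hu hw hadj
      have h := (σ.symm u).is_lt
      rw [Nat.sub_zero] at hu
      exact ((by omega : False)).elim
    · intro u hu hex
      have h := (σ.symm u).is_lt
      rw [Nat.sub_zero] at hu
      exact ((by omega : False)).elim
  | succ k ih =>
    by_cases h : Fintype.card V ≤ k
    · have he : Fintype.card V - (k + 1) = Fintype.card V - k := by omega
      rw [he]; exact ih
    · have ht : Fintype.card V - (k + 1) < Fintype.card V := by omega
      have he : Fintype.card V - (k + 1) + 1 = Fintype.card V - k := by omega
      exact inv_step hσ hDdeg ht (by rw [he]; exact ih.1) (by rw [he]; exact ih.2)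

lemma greedy_works (hσ : IsSimplicialOrdering G σ) {D : ℕ}
    (hDdeg : ∀ x, (G.neighborSet x).ncard ≤ D) :
    ProperAt G σ (greedy G σ D) 0 ∧ PCFAt G σ (greedy G σ D) 0 := by
  have := inv_all hσ hDdeg (Fintype.card V)
  rwa [Nat.sub_self] at this

end Descent

/-- a chordal graph with `Δ(G) ≥ 3` has `χ_pcf(G) ≤ Δ(G) + 1`. -/
theorem stmt_15 {V : Type*} [Fintype V] (G : SimpleGraph V)
    (hch : IsChordal G) (hD : 3 ≤ maxDeg G) :
    chiPCF G ≤ maxDeg G + 1 := by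
  classical
  obtain ⟨σ, hσ⟩ := hch
  set D := maxDeg G with hDdef
  have hcard : ∀ x : V, (G.neighborSet x).ncard ≤ Fintype.card V := by
    intro x
    have h1 := Set.ncard_le_ncard (Set.subset_univ (G.neighborSet x)) (Set.toFinite _)
    rwa [Set.ncard_univ, Nat.card_eq_fintype_card] at h1
  have hbdd : BddAbove (Set.range fun v => deg G v) := by
    refine ⟨Fintype.card V, ?_⟩
    rintro y ⟨x, rfl⟩
    exact hcard x
  have hDdeg : ∀ x, (G.neighborSet x).ncard ≤ D := by
    intro x
    exact le_csSup hbdd ⟨x, rfl⟩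
  obtain ⟨hprop, hpcf⟩ := greedy_works hσ hDdeg
  apply Nat.sInf_le
  refine ⟨greedy G σ D,
    ⟨⟨fun v => ?_, fun u w hadj => hprop u w (Nat.zero_le _) (Nat.zero_le _) hadj⟩,
      fun v hv => ?_⟩⟩
  · exact greedy_eq G σ D v ▸ pick_lt D _
  · obtain ⟨u, hu⟩ := hv
    obtain ⟨a, ha⟩ := hpcf v (Nat.zero_le _) ⟨u, hu, Nat.zero_le _⟩
    refine ⟨a, ?_⟩
    rw [← ha]
    unfold colMult mmul
    congr 1
    ext w
    simp [Nat.zero_le]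
end

section
/- For every positive integer h, every tree T has a proper h-conflict-free (h+2)-coloring. -/
open SimpleGraph

variable {V : Type*}

lemma aux_reach {G : SimpleGraph V} {s : Set V} {v w : V} (p : G.Walk v w)
    (hp : ∀ x ∈ p.support, x ∈ s) (hv : v ∈ s) (hw : w ∈ s) :
    (G.comap (Subtype.val : s → V)).Reachable ⟨v, hv⟩ ⟨w, hw⟩ := by
  induction p with
  | nil => exact Reachable.refl _
  | @cons a x c hadj q ih =>
    have hx : x ∈ s := hp x (by simp [Walk.support_cons])
    have h1 : (G.comap (Subtype.val : s → V)).Adj ⟨a, hv⟩ ⟨x, hx⟩ := hadj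
    exact h1.reachable.trans (ih (fun y hy => hp y (by simp [Walk.support_cons, hy])) hx hw)

lemma aux_internal {G : SimpleGraph V} {a b u : V} (p : G.Walk a b)
    (hp : p.IsPath) (hu : u ∈ p.support) (ha : u ≠ a) (hb : u ≠ b) :
    ∃ x y, x ≠ y ∧ G.Adj u x ∧ G.Adj u y := by
  classical
  have hq := (p.take_spec hu).symm
  set q := p.takeUntil u hu with hqdef
  set r := p.dropUntil u hu with hrdef
  obtain ⟨x, hxadj, q', hq'⟩ := (q.reverse).exists_eq_cons_of_ne ha
  obtain ⟨y, hyadj, r', hr'⟩ := r.exists_eq_cons_of_ne hb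
  refine ⟨x, y, ?_, hxadj, hyadj⟩
  have hxq : x ∈ q.support := by
    have : x ∈ q.reverse.support := by
      rw [hq']; simp [Walk.support_cons]
    rwa [Walk.support_reverse, List.mem_reverse] at this
  have hyr : y ∈ r.support.tail := by
    rw [hr']; simp [Walk.support_cons]
  have hnd : (q.support ++ r.support.tail).Nodup := by
    rw [← Walk.support_append, ← hq]; exact hp.support_nodup
  intro hxy
  exact (List.disjoint_of_nodup_append hnd) hxq (hxy ▸ hyr)

lemma aux_leaf [Fintype V] {G : SimpleGraph V} (hconn : G.Connected) (hacyc : G.IsAcyclic)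
    (hcard : 2 ≤ Fintype.card V) : ∃ u v0, G.neighborSet u = {v0} := by
  classical
  by_contra hno
  push_neg at hno
  have hdeg : ∀ u, 2 ≤ G.degree u := by
    intro u
    have hpos : 0 < G.degree u := by
      obtain ⟨w, hw⟩ := Fintype.exists_ne_of_one_lt_card (lt_of_lt_of_le one_lt_two hcard) u
      obtain ⟨p⟩ := hconn.preconnected u w
      cases p with
      | nil => exact absurd rfl hw
      | cons h q =>
        rw [G.degree_pos_iff_exists_adj]
        exact ⟨_, h⟩
    rcases Nat.lt_or_ge (G.degree u) 2 with hlt | hge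
    · have h1 : G.degree u = 1 := by omega
      obtain ⟨v0, hv0⟩ := Finset.card_eq_one.mp h1
      refine absurd ?_ (hno u v0)
      ext x
      rw [mem_neighborSet, ← mem_neighborFinset, hv0]
      simp
    · exact hge
  have hsum := G.sum_degrees_eq_twice_card_edges
  have htree : G.IsTree := ⟨hconn, hacyc⟩
  have hedge := htree.card_edgeFinset
  have hge : 2 * Fintype.card V ≤ ∑ v, G.degree v := by
    calc 2 * Fintype.card V = ∑ _v : V, 2 := by simp [mul_comm]
    _ ≤ ∑ v, G.degree v := Finset.sum_le_sum (fun i _ => hdeg i)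
  omega

lemma aux_main_s16 (h : ℕ) (h1 : 1 ≤ h) :
    ∀ (n : ℕ) {V : Type*} [Fintype V] (G : SimpleGraph V), Fintype.card V ≤ n →
      G.Connected → G.IsAcyclic → ∃ c, IsHCFCol G h (h + 2) c := by
  intro n
  induction n with
  | zero =>
    intro V _ G hcard hconn _
    have : 0 < Fintype.card V := @Fintype.card_pos V _ hconn.nonempty
    omega
  | succ n ih =>
    intro V _ G hcard hconn hacyc
    classical
    by_cases hsmall : Fintype.card V ≤ 1
    · refine ⟨fun _ => 0, ⟨⟨fun v => by show (0:ℕ) < h + 2; omega, fun a b hab => ?_⟩, fun v => ?_⟩⟩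
      · exact absurd (Fintype.one_lt_card_iff_nontrivial.mpr ⟨a, b, hab.ne⟩) (by omega)
      · have hdeg : deg G v = 0 := by
          have : G.neighborSet v = ∅ := by
            ext x
            simp only [mem_neighborSet, Set.mem_empty_iff_false, iff_false]
            intro hadj
            exact absurd (Fintype.one_lt_card_iff_nontrivial.mpr ⟨v, x, hadj.ne⟩) (by omega)
          rw [deg, this, Set.ncard_empty]
        simp [hdeg]
    · push_neg at hsmall
      obtain ⟨u, v0, hNu⟩ := aux_leaf hconn hacyc hsmall
      have huv : G.Adj u v0 := by
        have : v0 ∈ G.neighborSet u := by rw [hNu]; rfl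
        exact this
      have hv0u : v0 ≠ u := huv.ne'
      have honly : ∀ x, G.Adj u x → x = v0 := by
        intro x hx
        have : x ∈ G.neighborSet u := hx
        rwa [hNu, Set.mem_singleton_iff] at this
      set s : Set V := {x | x ≠ u} with hs
      set G' := G.comap (Subtype.val : s → V) with hG'
      have hadj' : ∀ {a b : s}, G'.Adj a b ↔ G.Adj ↑a ↑b := Iff.rfl
      have hcard' : Fintype.card s ≤ n := by
        have : Fintype.card s < Fintype.card V := by
          apply Fintype.card_lt_of_injective_of_notMem (Subtype.val : s → V)
            Subtype.val_injective (b := u)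
          intro hmem
          obtain ⟨⟨x, hx⟩, hval⟩ := hmem
          exact hx hval
        omega
      have hconn' : G'.Connected := by
        rw [connected_iff]
        refine ⟨?_, ⟨⟨v0, hv0u⟩⟩⟩
        rintro ⟨x, hx⟩ ⟨y, hy⟩
        obtain ⟨p⟩ := hconn.preconnected x y
        have hsupp : ∀ z ∈ (p.toPath : G.Walk x y).support, z ∈ s := by
          intro z hz
          by_contra hzu
          have hzu' : z = u := not_not.mp hzu
          subst hzu'
          obtain ⟨x1, y1, hxy1, hx1, hy1⟩ :=
            aux_internal (p.toPath : G.Walk x y) p.toPath.2 hz (Ne.symm hx) (Ne.symm hy)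
          have e1 : x1 = v0 := by
            have : x1 ∈ G.neighborSet z := hx1
            rwa [hNu, Set.mem_singleton_iff] at this
          have e2 : y1 = v0 := by
            have : y1 ∈ G.neighborSet z := hy1
            rwa [hNu, Set.mem_singleton_iff] at this
          exact hxy1 (e1.trans e2.symm)
        exact aux_reach _ hsupp hx hy
      have hacyc' : G'.IsAcyclic := by
        intro a p hp
        let f : G' →g G := ⟨Subtype.val, fun hadj => hadj⟩
        have hinj : Function.Injective f := Subtype.val_injective
        exact hacyc _ ((Walk.map_isCycle_iff_of_injective hinj).mpr hp)
      obtain ⟨c', ⟨⟨hlt', hne'⟩, hcf'⟩⟩ := ih G' hcard' hconn' hacyc'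
      set w0 : s := (⟨v0, hv0u⟩ : s) with hw0
      set m : ℕ → ℕ := fun a => colMult G' c' w0 a with hm
      set cv := c' w0 with hcv
      set S : Set ℕ := {a | m a = 1} with hS
      have hSfin : S.Finite := by
        apply Set.Finite.subset (Set.finite_range c')
        intro a ha
        have ha' : m a = 1 := ha
        obtain ⟨y, hy⟩ := Set.nonempty_of_ncard_ne_zero (by rw [show {u | G'.Adj w0 u ∧ c' u = a}.ncard = m a from rfl, ha']; omega)
        exact ⟨y, hy.2⟩
      have hcvlt : cv < h + 2 := hlt' w0
      have hScard : min (deg G' w0) h ≤ S.ncard := hcf' w0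
      -- choose the color b for u
      obtain ⟨b, hb2, hbcv, hbprop⟩ :
          ∃ b, b < h + 2 ∧ b ≠ cv ∧
            (m b = 0 ∨ (h ≤ deg G' w0 ∧ m b ≠ 0 ∧ (m b ≠ 1 ∨ h + 1 ≤ S.ncard))) := by
        have hposfin : {a | 0 < m a}.Finite := by
          apply Set.Finite.subset (Set.finite_range c')
          intro a ha
          have ha' : 0 < m a := ha
          obtain ⟨y, hy⟩ := Set.nonempty_of_ncard_ne_zero
            (by rw [show {u | G'.Adj w0 u ∧ c' u = a}.ncard = m a from rfl]; omega)
          exact ⟨y, hy.2⟩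
        have hposcard : {a | 0 < m a}.ncard ≤ deg G' w0 := by
          have hsub : {a | 0 < m a} ⊆ c' '' (G'.neighborSet w0) := by
            intro a ha
            have ha' : 0 < m a := ha
            obtain ⟨y, hy⟩ := Set.nonempty_of_ncard_ne_zero
              (by rw [show {u | G'.Adj w0 u ∧ c' u = a}.ncard = m a from rfl]; omega)
            exact ⟨y, hy.1, hy.2⟩
          calc {a | 0 < m a}.ncard ≤ (c' '' (G'.neighborSet w0)).ncard :=
                Set.ncard_le_ncard hsub ((Set.toFinite _).image _)
            _ ≤ (G'.neighborSet w0).ncard := Set.ncard_image_le (Set.toFinite _)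
            _ = deg G' w0 := rfl
        by_cases hx0 : ∃ b, b < h + 2 ∧ b ≠ cv ∧ m b = 0
        · obtain ⟨b, h1b, h2b, h3b⟩ := hx0
          exact ⟨b, h1b, h2b, Or.inl h3b⟩
        · push_neg at hx0
          have hIio : (Set.Iio (h + 2) \ {cv}).ncard = h + 1 := by
            rw [Set.ncard_diff_singleton_of_mem (Set.mem_Iio.mpr hcvlt)]
            rw [← Finset.coe_range, Set.ncard_coe_finset, Finset.card_range]
            omega
          have hcount : h + 1 ≤ {a | 0 < m a}.ncard := by
            have hset1 : (Set.Iio (h + 2) \ {cv}) ⊆ {a | 0 < m a} := by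
              rintro a ⟨ha1, ha2⟩
              exact Nat.pos_of_ne_zero (hx0 a ha1 ha2)
            calc h + 1 = (Set.Iio (h + 2) \ {cv}).ncard := hIio.symm
              _ ≤ {a | 0 < m a}.ncard := Set.ncard_le_ncard hset1 hposfin
          have hd' : h ≤ deg G' w0 := by omega
          by_cases hx1 : ∃ b, b < h + 2 ∧ b ≠ cv ∧ m b ≠ 1
          · obtain ⟨b, h1b, h2b, h3b⟩ := hx1
            exact ⟨b, h1b, h2b, Or.inr ⟨hd', hx0 b h1b h2b, Or.inl h3b⟩⟩
          · push_neg at hx1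
            have hb0lt : (if cv = 0 then 1 else 0) < h + 2 := by split <;> omega
            have hb0ne : (if cv = 0 then 1 else 0) ≠ cv := by split <;> omega
            refine ⟨_, hb0lt, hb0ne, Or.inr ⟨hd', hx0 _ hb0lt hb0ne, Or.inr ?_⟩⟩
            have hsubS : (Set.Iio (h + 2) \ {cv}) ⊆ S := by
              rintro a ⟨ha1, ha2⟩
              exact hx1 a ha1 ha2
            calc h + 1 = (Set.Iio (h + 2) \ {cv}).ncard := hIio.symm
              _ ≤ S.ncard := Set.ncard_le_ncard hsubS hSfin
      set c : V → ℕ := fun x => if hx : x = u then b else c' ⟨x, hx⟩ with hc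
      have hcu : c u = b := by simp [hc]
      have hcs : ∀ (y : s), c ↑y = c' y := by
        intro y
        simp only [hc, dif_neg y.2]
      -- colMult translations
      have hnbr1 : ∀ (w : s), (↑w : V) ≠ v0 → ∀ x, G.Adj ↑w x → x ≠ u := by
        intro w hw x hadj hxu
        exact hw (honly ↑w (hxu ▸ hadj).symm)
      have hmult1 : ∀ (w : s), (↑w : V) ≠ v0 → ∀ a, colMult G c ↑w a = colMult G' c' w a := by
        intro w hw a
        have hkey : {x | G.Adj ↑w x ∧ c x = a} = Subtype.val '' {y : s | G'.Adj w y ∧ c' y = a} := by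
          ext x
          constructor
          · rintro ⟨hadj, hcx⟩
            have hxu : x ≠ u := hnbr1 w hw x hadj
            exact ⟨⟨x, hxu⟩, ⟨hadj, by rw [← hcs ⟨x, hxu⟩]; exact hcx⟩, rfl⟩
          · rintro ⟨y, ⟨hadj, hcy⟩, rfl⟩
            exact ⟨hadj, (hcs y).trans hcy⟩
        rw [colMult, colMult, hkey, Set.ncard_image_of_injective _ Subtype.val_injective]
      have hmult2 : ∀ a, colMult G c v0 a = m a + (if a = b then 1 else 0) := by
        intro a
        have hkey : {x | G.Adj v0 x ∧ c x = a} =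
            (Subtype.val '' {y : s | G'.Adj w0 y ∧ c' y = a}) ∪ (if a = b then {u} else ∅) := by
          ext x
          constructor
          · rintro ⟨hadj, hcx⟩
            by_cases hxu : x = u
            · subst hxu
              have hab : a = b := by rw [← hcx, hcu]
              right
              simp [hab]
            · exact Or.inl ⟨⟨x, hxu⟩, ⟨hadj, by rw [← hcs ⟨x, hxu⟩]; exact hcx⟩, rfl⟩
          · rintro (⟨y, ⟨hadj, hcy⟩, rfl⟩ | hx)
            · exact ⟨hadj, (hcs y).trans hcy⟩
            · have hx' : x = u ∧ a = b := by
                by_cases hab : a = b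
                · rw [if_pos hab, Set.mem_singleton_iff] at hx
                  exact ⟨hx, hab⟩
                · rw [if_neg hab] at hx
                  exact absurd hx (Set.notMem_empty x)
              rw [hx'.1]
              exact ⟨huv.symm, by rw [hcu, hx'.2]⟩
        have him : (Subtype.val '' {y : s | G'.Adj w0 y ∧ c' y = a}).ncard = m a :=
          Set.ncard_image_of_injective _ Subtype.val_injective
        rw [colMult, hkey]
        by_cases hab : a = b
        · rw [if_pos hab, if_pos hab, Set.union_singleton,
            Set.ncard_insert_of_notMem (by rintro ⟨y, _, hy⟩; exact y.2 hy)
              ((Set.toFinite _).image _), him]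
        · rw [if_neg hab, if_neg hab, Set.union_empty, him]
          omega
      have hmultu : ∀ a, colMult G c u a = if a = cv then 1 else 0 := by
        intro a
        have hkey : {x | G.Adj u x ∧ c x = a} = if a = cv then {v0} else ∅ := by
          ext x
          constructor
          · rintro ⟨hadj, hcx⟩
            have hx : x = v0 := honly x hadj
            have hacv : a = cv := by rw [← hcx, hx]; exact hcs w0
            rw [if_pos hacv, Set.mem_singleton_iff]
            exact hx
          · intro hx
            by_cases hacv : a = cv
            · rw [if_pos hacv, Set.mem_singleton_iff] at hx
              subst hx
              exact ⟨huv, (hcs w0).trans hacv.symm⟩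
            · rw [if_neg hacv] at hx
              exact absurd hx (Set.notMem_empty x)
        rw [colMult, hkey]
        split <;> simp
      have hdegu : deg G u = 1 := by
        rw [deg, hNu, Set.ncard_singleton]
      have hdegv0 : deg G v0 = deg G' w0 + 1 := by
        have hNv0 : G.neighborSet v0 = insert u (Subtype.val '' (G'.neighborSet w0)) := by
          ext x
          constructor
          · intro hadj
            by_cases hxu : x = u
            · exact Or.inl hxu
            · exact Or.inr ⟨⟨x, hxu⟩, hadj, rfl⟩
          · rintro (rfl | ⟨y, hy, rfl⟩)
            · exact huv.symm
            · exact hy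
        rw [deg, hNv0, Set.ncard_insert_of_notMem (by rintro ⟨y, _, hy⟩; exact y.2 hy)
          ((Set.toFinite _).image _), Set.ncard_image_of_injective _ Subtype.val_injective]
        rfl
      have hdegw : ∀ (w : s), (↑w : V) ≠ v0 → deg G ↑w = deg G' w := by
        intro w hw
        have hNw : G.neighborSet ↑w = Subtype.val '' (G'.neighborSet w) := by
          ext x
          constructor
          · intro hadj
            exact ⟨⟨x, hnbr1 w hw x hadj⟩, hadj, rfl⟩
          · rintro ⟨y, hy, rfl⟩
            exact hy
        rw [deg, hNw, Set.ncard_image_of_injective _ Subtype.val_injective]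
        rfl
      refine ⟨c, ⟨⟨?_, ?_⟩, ?_⟩⟩
      · intro v
        by_cases hv : v = u
        · rw [hv, hcu]; exact hb2
        · rw [hcs ⟨v, hv⟩]; exact hlt' _
      · intro x y hxy
        by_cases hx : x = u
        · subst hx
          rw [honly y hxy, hcu, hcs w0]
          exact hbcv
        · by_cases hy : y = u
          · subst hy
            rw [honly x hxy.symm, hcu, hcs w0]
            exact hbcv.symm
          · rw [hcs ⟨x, hx⟩, hcs ⟨y, hy⟩]
            exact hne' ⟨x, hx⟩ ⟨y, hy⟩ hxy
      · intro v
        by_cases hvu : v = u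
        · subst hvu
          have hsetu : {a | colMult G c v a = 1} = {cv} := by
            ext a
            rw [Set.mem_setOf_eq, hmultu a, Set.mem_singleton_iff]
            by_cases hacv : a = cv <;> simp [hacv]
          rw [hsetu, Set.ncard_singleton, hdegu]
          omega
        · by_cases hv0 : v = v0
          · rw [hv0, hdegv0]
            have hset : ∀ a, (colMult G c v0 a = 1) ↔ ((a ≠ b ∧ m a = 1) ∨ (a = b ∧ m b = 0)) := by
              intro a
              rw [hmult2 a]
              by_cases hab : a = b <;> simp [hab] <;> omega
            rcases hbprop with hb0 | ⟨hd', hbne0, hbor⟩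
            · have heq : {a | colMult G c v0 a = 1} = insert b S := by
                ext a
                rw [Set.mem_setOf_eq, hset a, Set.mem_insert_iff]
                constructor
                · rintro (⟨_, ha⟩ | ⟨rfl, _⟩)
                  · exact Or.inr ha
                  · exact Or.inl rfl
                · rintro (rfl | ha)
                  · exact Or.inr ⟨rfl, hb0⟩
                  · by_cases hab : a = b
                    · exact Or.inr ⟨hab, hb0⟩
                    · exact Or.inl ⟨hab, ha⟩
              have hbS : b ∉ S := by
                intro hmem
                have : m b = 1 := hmem
                omega
              rw [heq, Set.ncard_insert_of_notMem hbS hSfin]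
              omega
            · rcases hbor with hbne1 | hbig
              · have heq : {a | colMult G c v0 a = 1} = S := by
                  ext a
                  rw [Set.mem_setOf_eq, hset a]
                  constructor
                  · rintro (⟨_, ha⟩ | ⟨rfl, hb0⟩)
                    · exact ha
                    · exact absurd hb0 hbne0
                  · intro ha
                    have ha' : m a = 1 := ha
                    exact Or.inl ⟨fun hab => hbne1 (hab ▸ ha'), ha'⟩
                rw [heq]
                omega
              · have hsub : S \ {b} ⊆ {a | colMult G c v0 a = 1} := by
                  rintro a ⟨ha, hab⟩
                  rw [Set.mem_setOf_eq, hset a]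
                  exact Or.inl ⟨hab, ha⟩
                have htfin : {a | colMult G c v0 a = 1}.Finite := by
                  apply Set.Finite.subset (hSfin.insert b)
                  intro a ha
                  rw [Set.mem_setOf_eq, hset a] at ha
                  rcases ha with ⟨_, ha⟩ | ⟨rfl, _⟩
                  · exact Set.mem_insert_of_mem _ ha
                  · exact Set.mem_insert _ _
                have h3 : (S \ {b}).ncard ≤ {a | colMult G c v0 a = 1}.ncard :=
                  Set.ncard_le_ncard hsub htfin
                have h2 : S.ncard - 1 ≤ (S \ {b}).ncard := by
                  by_cases hbS : b ∈ S
                  · rw [Set.ncard_diff_singleton_of_mem hbS]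
                  · rw [Set.diff_singleton_eq_self hbS]
                    omega
                omega
          · set w : s := (⟨v, hvu⟩ : s) with hwdef
            have h4 : deg G v = deg G' w := hdegw w hv0
            have hseteq : {a | colMult G c v a = 1} = {a | colMult G' c' w a = 1} := by
              ext a
              rw [Set.mem_setOf_eq, Set.mem_setOf_eq,
                show colMult G c v a = colMult G' c' w a from hmult1 w hv0 a]
            rw [h4, hseteq]
            exact hcf' w

/-- every tree has a proper h-conflict-free (h+2)-coloring. -/
theorem stmt_16 {V : Type*} [Fintype V] (G : SimpleGraph V) (h : ℕ) (h1 : 1 ≤ h)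
    (hconn : G.Connected) (hacyc : G.IsAcyclic) :
    ∃ c, IsHCFCol G h (h + 2) c := by
  exact aux_main_s16 h h1 (Fintype.card V) G le_rfl hconn hacyc
end
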